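/- arXiv:2405.11944 — 6 statements merged into one kernel-verified Lean document; each statement's English description precedes it below -/
import Mathlib

section
/- For positive integers m, k, the product of specialized Macdonald polynomials in n+1 variables satisfies P_{(m)}(x;q,0) · P_{(k,k,…,k,0)}(x;q,0) = ∑_{i=0}^{min(m,k)} [k choose i]_q [m choose i]_q (1-q)(1-q^2)⋯(1-q^i) · P_{(k+m-i, k, …, k, i)}(x;q,0), where (k,…,k,0) has n copies of k and the partition on the right has n-1 middle entries equal to k. -/
open Finset

/-- The Gaussian binomial coefficient `[n choose r]_q`, via the q-Pascal recursion. -/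
def qbinom {R : Type*} [CommRing R] (q : R) : ℕ → ℕ → R
  | _, 0 => 1
  | 0, _ + 1 => 0
  | n + 1, r + 1 => qbinom q n r + q ^ (r + 1) * qbinom q n (r + 1)

/-- `b_λ(s; q, 0)`: the Macdonald `b`-factor specialized at `t = 0`, for the box
`s = (i, j)` (row `i`, 0-indexed column `j`).  At `t = 0` it equals
`(1 - q^{a_λ(s)+1})⁻¹` if `s` lies in the diagram of `λ` with leg length `0`,
and `1` otherwise. -/
noncomputable def b0 {n : ℕ} (lam : Fin n → ℕ) (i : Fin n) (j : ℕ) : RatFunc ℚ :=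
  if j < lam i ∧ (Finset.univ.filter (fun i' : Fin n => j < lam i')).card = i.1 + 1
  then (1 - RatFunc.X ^ (lam i - j))⁻¹ else 1

/-- The Pieri coefficient `φ_{λ/μ}(q, 0) = ∏_{s ∈ C_{λ/μ}} b_λ(s)/b_μ(s)`, where
`C_{λ/μ}` is the union of the columns meeting `λ - μ`; `N` is any upper bound for the
number of columns of `λ`. -/
noncomputable def phi0 {n : ℕ} (N : ℕ) (lam mu : Fin n → ℕ) : RatFunc ℚ :=
  ∏ j ∈ Finset.range N,
    if ∃ i, j < lam i ∧ mu i ≤ j then ∏ i, b0 lam i j * (b0 mu i j)⁻¹ else 1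

/-- The set of partitions `λ` such that `λ ⊇ μ` and `λ - μ` is a horizontal strip
of size `m`. -/
def hstrips {n : ℕ} (mu : Fin n → ℕ) (m : ℕ) : Finset (Fin n → ℕ) :=
  ((Finset.univ : Finset ((i : Fin n) → Fin (mu i + m + 1))).image
      (fun f i => (f i : ℕ))).filter
    (fun lam => (∀ i, mu i ≤ lam i) ∧ (∀ i j : Fin n, i.1 + 1 = j.1 → lam j ≤ mu i)
      ∧ ∑ i, (lam i - mu i) = m)

lemma qbinom_zero {R : Type*} [CommRing R] (q : R) (n : ℕ) : qbinom q n 0 = 1 := by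
  cases n <;> rfl

lemma qbinom_eq_zero {R : Type*} [CommRing R] (q : R) : ∀ {n r : ℕ}, n < r → qbinom q n r = 0 := by
  intro n
  induction n with
  | zero => intro r h; match r, h with
    | r + 1, _ => rfl
  | succ n ih =>
    intro r h
    match r, h with
    | r + 1, h =>
      show qbinom q n r + q ^ (r + 1) * qbinom q n (r + 1) = 0
      rw [ih (show n < r by omega), ih (show n < r + 1 by omega)]; ring

lemma qbinom_mul {R : Type*} [CommRing R] (q : R) :
    ∀ (n r : ℕ), r ≤ n →
    qbinom q n r * (∏ a ∈ range r, (1 - q ^ (a + 1))) * (∏ a ∈ range (n - r), (1 - q ^ (a + 1)))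
      = ∏ a ∈ range n, (1 - q ^ (a + 1)) := by
  intro n
  induction n with
  | zero => intro r h; interval_cases r; simp [qbinom_zero]
  | succ n ih =>
    intro r h
    match r with
    | 0 => simp [qbinom_zero]
    | r + 1 =>
      show (qbinom q n r + q ^ (r + 1) * qbinom q n (r + 1)) * _ * _ = _
      rcases eq_or_lt_of_le h with h' | h'
      · have hr : r = n := by omega
        subst hr
        have hz : qbinom q r (r + 1) = 0 := qbinom_eq_zero q (Nat.lt_succ_self r)
        have hih := ih r le_rfl
        simp only [Nat.sub_self, range_zero, prod_empty, mul_one] at hih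
        simp only [Nat.sub_self, range_zero, prod_empty, mul_one, hz, mul_zero, add_zero]
        rw [prod_range_succ]
        linear_combination (1 - q ^ (r + 1)) * hih
      · have hr : r + 1 ≤ n := by omega
        have h1 := ih r (by omega)
        have h2 := ih (r + 1) hr
        have e1 : n - r = (n - (r + 1)) + 1 := by omega
        have e2 : n + 1 - (r + 1) = n - r := by omega
        rw [e1] at h1
        simp only [prod_range_succ] at h1 h2 ⊢
        rw [e2, e1]
        simp only [prod_range_succ]
        have hq : q ^ (r + 1) * q ^ (n - (r + 1) + 1) = q ^ (n + 1) := by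
          rw [← pow_add]; congr 1; omega
        linear_combination (1 - q ^ (r + 1)) * h1 + q ^ (r + 1) * (1 - q ^ (n - (r + 1) + 1)) * h2
          - (∏ a ∈ range n, (1 - q ^ (a + 1))) * hq

lemma prod_split {R : Type*} [CommRing R] (q : R) (k : ℕ) :
    ∀ i ≤ k, (∏ a ∈ range (k - i), (1 - q ^ (a + 1))) * ∏ j ∈ range i, (1 - q ^ (k - j))
      = ∏ a ∈ range k, (1 - q ^ (a + 1)) := by
  intro i
  induction i with
  | zero => simp
  | succ i ih =>
    intro h
    have e1 : k - i = (k - (i + 1)) + 1 := by omega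
    have e2 : k - (i + 1) + 1 = k - i := by omega
    rw [prod_range_succ, ← mul_assoc, mul_comm _ (1 - q ^ (k - i)), ← ih (by omega)]
    rw [e1, prod_range_succ, e2]
    ring

lemma X_pow_sub_one_ne {a : ℕ} (ha : 0 < a) : (1 : RatFunc ℚ) - RatFunc.X ^ a ≠ 0 := by
  intro h
  have hx : (RatFunc.X : RatFunc ℚ) ^ a = 1 := by linear_combination -h
  have : (Polynomial.X : Polynomial ℚ) ^ a = 1 := by
    apply RatFunc.algebraMap_injective ℚ
    simpa [map_pow, RatFunc.algebraMap_X] using hx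
  have := congrArg Polynomial.natDegree this
  simp [Polynomial.natDegree_X_pow] at this
  omega

lemma prodA_ne_zero (t : ℕ) : (∏ a ∈ range t, (1 - (RatFunc.X : RatFunc ℚ) ^ (a + 1))) ≠ 0 :=
  Finset.prod_ne_zero_iff.mpr fun a _ => X_pow_sub_one_ne (by omega)

lemma prod_b0_eq {N : ℕ} (lam : Fin N → ℕ) (j : ℕ) (r₀ : Fin N) (h1 : j < lam r₀)
    (h2 : (univ.filter (fun r => j < lam r)).card = r₀.1 + 1) :
    ∏ r, b0 lam r j = (1 - RatFunc.X ^ (lam r₀ - j))⁻¹ := by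
  rw [Finset.prod_eq_single r₀]
  · rw [b0, if_pos ⟨h1, h2⟩]
  · intro r _ hr
    rw [b0, if_neg]
    rintro ⟨hj, hc⟩
    exact hr (Fin.ext (by omega))
  · simp

lemma prod_b0_one {N : ℕ} (lam : Fin N → ℕ) (j : ℕ) (h : ∀ r, lam r ≤ j) :
    ∏ r, b0 lam r j = 1 :=
  Finset.prod_eq_one fun r _ => by
    rw [b0, if_neg]; rintro ⟨hj, _⟩; exact absurd hj (not_lt.2 (h r))

lemma prod_inv_reflect (s : ℕ) :
    ∏ t ∈ range s, (1 - (RatFunc.X : RatFunc ℚ) ^ (s - t))⁻¹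
      = (∏ a ∈ range s, (1 - (RatFunc.X : RatFunc ℚ) ^ (a + 1)))⁻¹ := by
  rw [← Finset.prod_inv_distrib,
    ← prod_range_reflect (fun a => (1 - (RatFunc.X : RatFunc ℚ) ^ (a + 1))⁻¹) s]
  apply Finset.prod_congr rfl
  intro t ht
  rw [mem_range] at ht
  rw [show s - 1 - t + 1 = s - t from by omega]

set_option linter.unnecessarySeqFocus false in
lemma phi0_eval (n m k i₀ : ℕ) (hn : 1 ≤ n) (him : i₀ ≤ m) (hik : i₀ ≤ k) :
    phi0 (k + m)
        (fun r : Fin (n+1) => if r = 0 then k + m - i₀ else if r = Fin.last n then i₀ else k)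
        (fun r : Fin (n+1) => if r = Fin.last n then 0 else k)
      = (∏ a ∈ range i₀, (1 - (RatFunc.X : RatFunc ℚ) ^ (a + 1)))⁻¹
        * (∏ j ∈ range i₀, (1 - (RatFunc.X : RatFunc ℚ) ^ (k - j)))
        * (∏ a ∈ range (m - i₀), (1 - (RatFunc.X : RatFunc ℚ) ^ (a + 1)))⁻¹ := by
  set q : RatFunc ℚ := RatFunc.X with hq
  set lam : Fin (n+1) → ℕ :=
    fun r => if r = 0 then k + m - i₀ else if r = Fin.last n then i₀ else k with hlam
  set mu : Fin (n+1) → ℕ := fun r => if r = Fin.last n then 0 else k with hmu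
  have hlast0 : (Fin.last n : Fin (n+1)) ≠ 0 := by
    intro h; have := congrArg Fin.val h; simp [Fin.last] at this; omega
  have hval_lam : ∀ r : Fin (n+1), lam r = k + m - i₀ ∨ lam r = i₀ ∨ lam r = k := by
    intro r; by_cases h0 : r = 0
    · left; simp [hlam, h0]
    · by_cases hl : r = Fin.last n
      · right; left; simp [hlam, h0, hl, hlast0]
      · right; right; simp [hlam, h0, hl]
  have hlam_le : ∀ r, lam r ≤ k + m - i₀ := by
    intro r; rcases hval_lam r with h | h | h <;> omega
  have key : phi0 (k + m) lam mu = ∏ j ∈ range (k + m),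
      (if j < i₀ then (1 - q ^ (i₀ - j))⁻¹ * (1 - q ^ (k - j))
       else if k ≤ j ∧ j < k + m - i₀ then (1 - q ^ (k + m - i₀ - j))⁻¹ else 1) := by
    rw [phi0]
    apply Finset.prod_congr rfl
    intro j hj
    rw [mem_range] at hj
    by_cases hji : j < i₀
    · rw [if_pos, if_pos hji]
      · have hlamprod : ∏ r, b0 lam r j = (1 - q ^ (i₀ - j))⁻¹ := by
          have h1 : j < lam (Fin.last n) := by simp [hlam, hlast0]; omega
          have h2 : (univ.filter fun r => j < lam r).card = (Fin.last n).1 + 1 := by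
            rw [Finset.filter_true_of_mem, card_univ, Fintype.card_fin, Fin.val_last]
            intro r _
            rcases hval_lam r with h | h | h <;> omega
          have hv : lam (Fin.last n) = i₀ := by simp [hlam, hlast0]
          rw [prod_b0_eq lam j (Fin.last n) h1 h2, hv]
        have hmuprod : ∏ r, b0 mu r j = (1 - q ^ (k - j))⁻¹ := by
          have hne : (⟨n - 1, by omega⟩ : Fin (n+1)) ≠ Fin.last n := by
            intro h; have := congrArg Fin.val h; simp [Fin.last] at this; omega
          have h1 : j < mu ⟨n - 1, by omega⟩ := by simp [hmu, hne]; omega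
          have h2 : (univ.filter fun r => j < mu r).card = (⟨n - 1, by omega⟩ : Fin (n+1)).1 + 1 := by
            have : (univ.filter fun r => j < mu r) = univ.filter (fun r => r ≠ Fin.last n) := by
              apply Finset.filter_congr
              intro r _
              by_cases h : r = Fin.last n <;> simp [hmu, h] <;> omega
            rw [this, Finset.filter_ne', Finset.card_erase_of_mem (mem_univ _), card_univ,
              Fintype.card_fin]
            simp; omega
          have hv : mu ⟨n - 1, by omega⟩ = k := by simp [hmu, hne]
          rw [prod_b0_eq mu j _ h1 h2, hv]
        rw [Finset.prod_mul_distrib, Finset.prod_inv_distrib, hlamprod, hmuprod, inv_inv]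
      · exact ⟨Fin.last n, by simp [hlam, hmu, hlast0]; omega⟩
    · by_cases hjk : k ≤ j ∧ j < k + m - i₀
      · rw [if_pos, if_neg hji, if_pos hjk]
        · have hlamprod : ∏ r, b0 lam r j = (1 - q ^ (k + m - i₀ - j))⁻¹ := by
            have h1 : j < lam 0 := by simp [hlam]; omega
            have h2 : (univ.filter fun r => j < lam r).card = (0 : Fin (n+1)).1 + 1 := by
              have : (univ.filter fun r => j < lam r) = {0} := by
                ext r
                simp only [mem_filter, mem_univ, true_and, mem_singleton]
                constructor
                · intro hr
                  by_contra h0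
                  have : lam r = i₀ ∨ lam r = k := by
                    rcases hval_lam r with h | h | h
                    · exfalso; by_cases hc : r = 0
                      · exact h0 hc
                      · simp [hlam, hc] at h; split at h <;> omega
                    · tauto
                    · tauto
                  omega
                · intro hr; subst hr; simp [hlam]; omega
              rw [this]; simp
            have hv : lam 0 = k + m - i₀ := by simp [hlam]
            rw [prod_b0_eq lam j 0 h1 h2, hv]
          have hmuprod : ∏ r, b0 mu r j = 1 := by
            apply prod_b0_one
            intro r
            by_cases h : r = Fin.last n <;> simp [hmu, h] <;> omega
          rw [Finset.prod_mul_distrib, Finset.prod_inv_distrib, hlamprod, hmuprod, inv_one,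
            mul_one]
        · refine ⟨0, ?_, ?_⟩
          · simp [hlam]; omega
          · simp [hmu, hlast0.symm]; omega
      · rw [if_neg, if_neg hji, if_neg hjk]
        rintro ⟨r, hr1, hr2⟩
        by_cases h : r = Fin.last n
        · subst h
          simp [hlam, hlast0] at hr1
          omega
        · have hmur : mu r = k := by simp [hmu, h]
          have : lam r ≤ k + m - i₀ := hlam_le r
          rcases hval_lam r with hv | hv | hv <;> omega
  rw [key]
  have hsub : range i₀ ∪ Ico k (k + m - i₀) ⊆ range (k + m) := by
    intro j hj
    rw [mem_union, mem_range, mem_Ico] at hj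
    rw [mem_range]
    omega
  rw [← Finset.prod_subset hsub]
  · have hdisj : Disjoint (range i₀) (Ico k (k + m - i₀)) := by
      rw [Finset.disjoint_left]
      intro j hj hj'
      rw [mem_range] at hj
      rw [mem_Ico] at hj'
      omega
    rw [Finset.prod_union hdisj]
    have h1 : ∏ j ∈ range i₀,
        (if j < i₀ then (1 - q ^ (i₀ - j))⁻¹ * (1 - q ^ (k - j))
         else if k ≤ j ∧ j < k + m - i₀ then (1 - q ^ (k + m - i₀ - j))⁻¹ else 1)
        = (∏ a ∈ range i₀, (1 - q ^ (a + 1)))⁻¹ * ∏ j ∈ range i₀, (1 - q ^ (k - j)) := by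
      rw [← prod_inv_reflect i₀, ← Finset.prod_mul_distrib]
      apply Finset.prod_congr rfl
      intro j hj
      rw [mem_range] at hj
      rw [if_pos hj]
    have h2 : ∏ j ∈ Ico k (k + m - i₀),
        (if j < i₀ then (1 - q ^ (i₀ - j))⁻¹ * (1 - q ^ (k - j))
         else if k ≤ j ∧ j < k + m - i₀ then (1 - q ^ (k + m - i₀ - j))⁻¹ else 1)
        = (∏ a ∈ range (m - i₀), (1 - q ^ (a + 1)))⁻¹ := by
      rw [Finset.prod_Ico_eq_prod_range]
      rw [show k + m - i₀ - k = m - i₀ from by omega, ← prod_inv_reflect (m - i₀)]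
      apply Finset.prod_congr rfl
      intro t ht
      rw [mem_range] at ht
      rw [if_neg (by omega), if_pos (by omega),
        show k + m - i₀ - (k + t) = m - i₀ - t from by omega]
    rw [h1, h2]
  · intro j hj hj'
    rw [mem_range] at hj
    rw [mem_union, mem_range, mem_Ico] at hj'
    push_neg at hj'
    rw [if_neg (by omega), if_neg (by omega)]

theorem stmt6 {A : Type} [CommRing A] [Algebra (RatFunc ℚ) A] (n m k : ℕ)
    (hn : 1 ≤ n) (hm : 0 < m) (hk : 0 < k)
    (P : (Fin (n+1) → ℕ) → A) (g : ℕ → A)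
    (hPg : ∀ l : ℕ, P (fun r => if r = 0 then l else 0)
      = algebraMap (RatFunc ℚ) A (∏ a ∈ Finset.range l, (1 - RatFunc.X ^ (a + 1))) * g l)
    (hPieri : ∀ (mu : Fin (n+1) → ℕ), Antitone mu → ∀ l : ℕ,
      P mu * g l = ∑ lam ∈ hstrips mu l,
        algebraMap (RatFunc ℚ) A (phi0 (mu 0 + l) lam mu) * P lam) :
    P (fun r => if r = 0 then m else 0) * P (fun r => if r = Fin.last n then 0 else k)
      = ∑ i ∈ Finset.range (min m k + 1),
          algebraMap (RatFunc ℚ) A (qbinom (RatFunc.X : RatFunc ℚ) k i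
              * qbinom (RatFunc.X : RatFunc ℚ) m i
              * ∏ a ∈ Finset.range i, (1 - RatFunc.X ^ (a + 1)))
            * P (fun r => if r = 0 then k + m - i else if r = Fin.last n then i else k) := by
  classical
  set mu : Fin (n+1) → ℕ := fun r => if r = Fin.last n then 0 else k with hmu
  have hlast0 : (Fin.last n : Fin (n+1)) ≠ 0 := by
    intro h; have := congrArg Fin.val h; simp [Fin.last] at this; omega
  have hmu0 : mu 0 = k := by simp [hmu, hlast0.symm]
  have hmu_ne : ∀ r : Fin (n+1), r ≠ Fin.last n → mu r = k := fun r hr => by simp [hmu, hr]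
  have hanti : Antitone mu := by
    intro a b hab
    by_cases hb : b = Fin.last n
    · simp [hmu, hb]
    · have ha : a ≠ Fin.last n := by
        intro h; subst h; exact hb (le_antisymm (Fin.le_last b) hab)
      simp [hmu, ha, hb]
  have step1 : P (fun r => if r = 0 then m else 0) * P mu
      = ∑ lam ∈ hstrips mu m,
          algebraMap (RatFunc ℚ) A ((∏ a ∈ Finset.range m, (1 - (RatFunc.X : RatFunc ℚ) ^ (a + 1)))
            * phi0 (k + m) lam mu) * P lam := by
    rw [hPg m, mul_assoc, mul_comm (g m) (P mu), hPieri mu hanti m, Finset.mul_sum]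
    apply Finset.sum_congr rfl
    intro lam _
    rw [hmu0, map_mul, mul_assoc]
  rw [step1]
  -- reindex the sum
  have hkm : ∀ i₀, i₀ ≤ min m k → k ≤ k + m - i₀ ∧ k + m - i₀ ≤ k + m := by
    intro i₀ h; omega
  refine Finset.sum_bij' (i := fun lam _ => lam (Fin.last n))
    (j := fun i _ => fun r : Fin (n+1) => if r = 0 then k + m - i else if r = Fin.last n then i else k)
    ?_ ?_ ?_ ?_ ?_
  · -- membership: lam last ∈ range (min m k + 1)
    intro lam hlam
    rw [hstrips, mem_filter] at hlam
    obtain ⟨-, h1, h2, h3⟩ := hlam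
    have hle_k : lam (Fin.last n) ≤ k := by
      have hne : (⟨n - 1, by omega⟩ : Fin (n+1)) ≠ Fin.last n := by
        intro h; have := congrArg Fin.val h; simp [Fin.last] at this; omega
      have := h2 ⟨n - 1, by omega⟩ (Fin.last n) (by simp [Fin.last]; omega)
      rwa [hmu_ne _ hne] at this
    have hle_m : lam (Fin.last n) ≤ m := by
      have h := Finset.single_le_sum (f := fun r => lam r - mu r)
        (fun r _ => Nat.zero_le _) (mem_univ (Fin.last n))
      have hml : mu (Fin.last n) = 0 := by simp [hmu]
      simp only [h3, hml, Nat.sub_zero] at h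
      omega
    rw [mem_range]
    have := min_le_left m k
    have := min_le_right m k
    exact Nat.lt_succ_of_le (le_min hle_m hle_k)
  · -- membership: lamfun i ∈ hstrips mu m
    intro i hi
    rw [mem_range] at hi
    have him : i ≤ m := by omega
    have hik : i ≤ k := by omega
    rw [hstrips, mem_filter]
    refine ⟨?_, ?_, ?_, ?_⟩
    · rw [mem_image]
      refine ⟨fun r => ⟨if r = 0 then k + m - i else if r = Fin.last n then i else k, ?_⟩,
        mem_univ _, rfl⟩
      by_cases h0 : r = 0
      · simp [h0, hmu0]
      · by_cases hl : r = Fin.last n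
        · subst hl; simp [hmu, h0]; omega
        · simp [h0, hl, hmu_ne r hl]
    · intro r
      by_cases h0 : r = 0
      · subst h0; rw [hmu0]; simp; omega
      · by_cases hl : r = Fin.last n
        · subst hl; simp [hmu]
        · simp [h0, hl, hmu_ne r hl]
    · intro r s hrs
      have hs0 : s ≠ 0 := by
        intro h; subst h; simp at hrs
      have hrl : r ≠ Fin.last n := by
        intro h; subst h; simp [Fin.last] at hrs; omega
      rw [hmu_ne r hrl]
      by_cases hsl : s = Fin.last n
      · simp [hs0, hsl, show n ≠ 0 from by omega]; omega
      · simp [hs0, hsl]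
    · have hterm : ∀ r : Fin (n+1),
          (if r = 0 then k + m - i else if r = Fin.last n then i else k) - mu r
            = (if r = 0 then m - i else 0) + (if r = Fin.last n then i else 0) := by
        intro r
        by_cases h0 : r = 0
        · subst h0; rw [hmu0]; simp [hlast0.symm]; omega
        · by_cases hl : r = Fin.last n
          · subst hl; simp [hmu, h0]
          · simp [h0, hl, hmu_ne r hl]
      rw [Finset.sum_congr rfl (fun r _ => hterm r), Finset.sum_add_distrib,
        Finset.sum_ite_eq' univ (0 : Fin (n+1)) (fun _ => m - i),
        Finset.sum_ite_eq' univ (Fin.last n) (fun _ => i)]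
      simp
      omega
  · -- left inverse : lamfun (lam last) = lam
    intro lam hlam
    rw [hstrips, mem_filter] at hlam
    obtain ⟨-, h1, h2, h3⟩ := hlam
    have hmid : ∀ r : Fin (n+1), r ≠ 0 → r ≠ Fin.last n → lam r = k := by
      intro r h0 hl
      have hr1 : 1 ≤ r.1 := by
        rcases Nat.eq_zero_or_pos r.1 with h | h
        · exact absurd (Fin.ext h) h0
        · exact h
      have hrn : r.1 ≤ n := by omega
      have hprev : (⟨r.1 - 1, by omega⟩ : Fin (n+1)) ≠ Fin.last n := by
        intro h; have := congrArg Fin.val h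
        simp [Fin.last] at this
        have : r.1 ≤ n := Nat.lt_succ_iff.mp r.2
        have : r = Fin.last n := Fin.ext (by omega)
        exact hl this
      have hle := h2 ⟨r.1 - 1, by omega⟩ r (by simp; omega)
      rw [hmu_ne _ hprev] at hle
      have hge := h1 r
      rw [hmu_ne r hl] at hge
      omega
    have hsum : (lam 0 - mu 0) + (lam (Fin.last n) - mu (Fin.last n)) = m := by
      rw [← h3]
      symm
      apply Finset.sum_eq_add 0 (Fin.last n) hlast0.symm
      · intro c _ ⟨hc0, hcl⟩
        rw [hmid c hc0 hcl, hmu_ne c hcl]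
        omega
      · exact fun h => absurd (mem_univ _) h
      · exact fun h => absurd (mem_univ _) h
    have hml : mu (Fin.last n) = 0 := by simp [hmu]
    have hge0 := h1 0
    rw [hmu0] at hge0
    rw [hmu0, hml] at hsum
    funext r
    by_cases h0 : r = 0
    · subst h0
      simp [hlast0.symm]
      omega
    · by_cases hl : r = Fin.last n
      · subst hl; simp [h0]
      · simp [h0, hl]
        exact (hmid r h0 hl).symm
  · -- right inverse
    intro i hi
    simp [hlast0]
  · -- values agree
    intro lam hlam
    rw [hstrips, mem_filter] at hlam
    obtain ⟨-, h1, h2, h3⟩ := hlam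
    have hle_k : lam (Fin.last n) ≤ k := by
      have hne : (⟨n - 1, by omega⟩ : Fin (n+1)) ≠ Fin.last n := by
        intro h; have := congrArg Fin.val h; simp [Fin.last] at this; omega
      have := h2 ⟨n - 1, by omega⟩ (Fin.last n) (by simp [Fin.last]; omega)
      rwa [hmu_ne _ hne] at this
    have hle_m : lam (Fin.last n) ≤ m := by
      have h := Finset.single_le_sum (f := fun r => lam r - mu r)
        (fun r _ => Nat.zero_le _) (mem_univ (Fin.last n))
      have hml : mu (Fin.last n) = 0 := by simp [hmu]
      simp only [h3, hml, Nat.sub_zero] at h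
      omega
    have hmid : ∀ r : Fin (n+1), r ≠ 0 → r ≠ Fin.last n → lam r = k := by
      intro r h0 hl
      have hr1 : 1 ≤ r.1 := by
        rcases Nat.eq_zero_or_pos r.1 with h | h
        · exact absurd (Fin.ext h) h0
        · exact h
      have hrn : r.1 ≤ n := by omega
      have hprev : (⟨r.1 - 1, by omega⟩ : Fin (n+1)) ≠ Fin.last n := by
        intro h; have := congrArg Fin.val h
        simp [Fin.last] at this
        have : r.1 ≤ n := Nat.lt_succ_iff.mp r.2
        have : r = Fin.last n := Fin.ext (by omega)
        exact hl this
      have hle := h2 ⟨r.1 - 1, by omega⟩ r (by simp; omega)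
      rw [hmu_ne _ hprev] at hle
      have hge := h1 r
      rw [hmu_ne r hl] at hge
      omega
    have hsum : (lam 0 - mu 0) + (lam (Fin.last n) - mu (Fin.last n)) = m := by
      rw [← h3]
      symm
      apply Finset.sum_eq_add 0 (Fin.last n) hlast0.symm
      · intro c _ ⟨hc0, hcl⟩
        rw [hmid c hc0 hcl, hmu_ne c hcl]
        omega
      · exact fun h => absurd (mem_univ _) h
      · exact fun h => absurd (mem_univ _) h
    have hml : mu (Fin.last n) = 0 := by simp [hmu]
    have hge0 := h1 0
    rw [hmu0] at hge0
    rw [hmu0, hml] at hsum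
    have hsh : lam = (fun r : Fin (n+1) => if r = 0 then k + m - lam (Fin.last n)
        else if r = Fin.last n then lam (Fin.last n) else k) := by
      funext r
      by_cases h0 : r = 0
      · subst h0
        simp [hlast0.symm]
        omega
      · by_cases hl : r = Fin.last n
        · subst hl; simp [h0]
        · simp [h0, hl]
          exact hmid r h0 hl
    obtain ⟨i₀, him, hik, heq, hfun⟩ : ∃ i₀, i₀ ≤ m ∧ i₀ ≤ k ∧ lam (Fin.last n) = i₀ ∧
        lam = (fun r : Fin (n+1) => if r = 0 then k + m - i₀
          else if r = Fin.last n then i₀ else k) :=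
      ⟨lam (Fin.last n), hle_m, hle_k, rfl, hsh⟩
    beta_reduce
    rw [heq, hfun]
    have hcoef : (∏ a ∈ Finset.range m, (1 - (RatFunc.X : RatFunc ℚ) ^ (a + 1)))
        * phi0 (k + m) (fun r : Fin (n+1) => if r = 0 then k + m - i₀
            else if r = Fin.last n then i₀ else k) mu
        = qbinom (RatFunc.X : RatFunc ℚ) k i₀ * qbinom (RatFunc.X : RatFunc ℚ) m i₀
          * ∏ a ∈ Finset.range i₀, (1 - RatFunc.X ^ (a + 1)) := by
      rw [hmu, phi0_eval n m k i₀ hn him hik]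
      have hAi := prodA_ne_zero i₀
      have hAmi := prodA_ne_zero (m - i₀)
      have hAki := prodA_ne_zero (k - i₀)
      have h1' := qbinom_mul (RatFunc.X : RatFunc ℚ) k i₀ hik
      have h2' := qbinom_mul (RatFunc.X : RatFunc ℚ) m i₀ him
      have h3' := prod_split (RatFunc.X : RatFunc ℚ) k i₀ hik
      have hQm : qbinom (RatFunc.X : RatFunc ℚ) m i₀
          = (∏ a ∈ Finset.range m, (1 - (RatFunc.X : RatFunc ℚ) ^ (a + 1)))
            * (∏ a ∈ Finset.range i₀, (1 - (RatFunc.X : RatFunc ℚ) ^ (a + 1)))⁻¹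
            * (∏ a ∈ Finset.range (m - i₀), (1 - (RatFunc.X : RatFunc ℚ) ^ (a + 1)))⁻¹ := by
        field_simp
        linear_combination h2'
      have hQkAi : qbinom (RatFunc.X : RatFunc ℚ) k i₀
            * (∏ a ∈ Finset.range i₀, (1 - (RatFunc.X : RatFunc ℚ) ^ (a + 1)))
          = ∏ j ∈ Finset.range i₀, (1 - (RatFunc.X : RatFunc ℚ) ^ (k - j)) := by
        apply mul_left_cancel₀ hAki
        linear_combination h1' - h3'
      calc (∏ a ∈ Finset.range m, (1 - (RatFunc.X : RatFunc ℚ) ^ (a + 1)))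
            * ((∏ a ∈ Finset.range i₀, (1 - (RatFunc.X : RatFunc ℚ) ^ (a + 1)))⁻¹
              * (∏ j ∈ Finset.range i₀, (1 - (RatFunc.X : RatFunc ℚ) ^ (k - j)))
              * (∏ a ∈ Finset.range (m - i₀), (1 - (RatFunc.X : RatFunc ℚ) ^ (a + 1)))⁻¹)
          = qbinom (RatFunc.X : RatFunc ℚ) m i₀
              * (∏ j ∈ Finset.range i₀, (1 - (RatFunc.X : RatFunc ℚ) ^ (k - j))) := by
            rw [hQm]; ring
        _ = qbinom (RatFunc.X : RatFunc ℚ) m i₀ * (qbinom (RatFunc.X : RatFunc ℚ) k i₀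
              * (∏ a ∈ Finset.range i₀, (1 - (RatFunc.X : RatFunc ℚ) ^ (a + 1)))) := by
            rw [hQkAi]
        _ = qbinom (RatFunc.X : RatFunc ℚ) k i₀ * qbinom (RatFunc.X : RatFunc ℚ) m i₀
              * ∏ a ∈ Finset.range i₀, (1 - RatFunc.X ^ (a + 1)) := by ring
    rw [hcoef]
end

section
/- For positive integers m, k, the product P_{(m)}(x;q,0) · P_{(k)}(x;q,0) of specialized Macdonald polynomials in n+1 variables equals ∑_{i=0}^{min(m,k)} [k choose i]_q [m choose i]_q (1-q)(1-q^2)⋯(1-q^i) · P_{(m+k-i, i, 0, …, 0)}(x;q,0). -/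
/-
At `t = 0` Pieri's rule multiplies the one-row polynomial `P_{(m)}` by `g_k` by adding a
horizontal strip of size `k`; for a one-row `μ = (m)` these strips are exactly the two-row
shapes `(m + k - i, i)` with `i ≤ min m k`. Only columns `j < i` (second row) and
`m ≤ j < m + k - i` (end of the first row) contribute to `φ_{λ/μ}`, giving
`φ = (q;q)_m / ((q;q)_{m-i} (q;q)_i (q;q)_{k-i})`; multiplying by `(q;q)_k` from
`P_{(k)} = (q;q)_k g_k` produces `[k choose i]_q [m choose i]_q (q;q)_i`.
-/

open Finset

section QAnalogues

variable {R : Type*} [CommRing R] (q : R)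

def qpoch (n : ℕ) : R :=
  ∏ a ∈ range n, (1 - q ^ (a + 1))

lemma qpoch_succ (n : ℕ) : qpoch q (n + 1) = qpoch q n * (1 - q ^ (n + 1)) :=
  prod_range_succ _ _

lemma qbinom_eq_zero_of_lt : ∀ {n r : ℕ}, n < r → qbinom q n r = 0
  | 0, _ + 1, _ => rfl
  | n + 1, r + 1, h => by
      rw [qbinom, qbinom_eq_zero_of_lt (by omega), qbinom_eq_zero_of_lt (by omega)]
      ring

lemma qbinom_self : ∀ n : ℕ, qbinom q n n = 1
  | 0 => rfl
  | n + 1 => by rw [qbinom, qbinom_self n, qbinom_eq_zero_of_lt q (Nat.lt_succ_self n)]; ring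

lemma qbinom_mul_qpoch_mul_qpoch :
    ∀ {n r : ℕ}, r ≤ n → qbinom q n r * (qpoch q r * qpoch q (n - r)) = qpoch q n
  | n, 0, _ => by simp [qbinom, qpoch]
  | n + 1, r + 1, h => by
      obtain rfl | hrn := eq_or_lt_of_le (Nat.le_of_succ_le_succ h)
      · simp [qbinom, qbinom_eq_zero_of_lt q (Nat.lt_succ_self r), qbinom_self, qpoch]
      obtain ⟨d, rfl⟩ : ∃ d, n = r + 1 + d := ⟨n - (r + 1), by omega⟩
      have ih₁ := qbinom_mul_qpoch_mul_qpoch (n := r + 1 + d) (r := r) (by omega)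
      have ih₂ := qbinom_mul_qpoch_mul_qpoch (n := r + 1 + d) (r := r + 1) (by omega)
      rw [show r + 1 + d - r = d + 1 by omega, qpoch_succ] at ih₁
      rw [show r + 1 + d - (r + 1) = d by omega, qpoch_succ] at ih₂
      rw [show r + 1 + d + 1 - (r + 1) = d + 1 by omega, qbinom, qpoch_succ, qpoch_succ,
        qpoch_succ]
      linear_combination (1 - q ^ (r + 1)) * ih₁ + q ^ (r + 1) * (1 - q ^ (d + 1)) * ih₂

lemma prod_range_one_sub_pow_sub (c : ℕ) : ∏ j ∈ range c, (1 - q ^ (c - j)) = qpoch q c := by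
  rw [qpoch, ← prod_range_reflect]
  exact prod_congr rfl fun j hj => by rw [mem_range] at hj; congr 2; omega

lemma qpoch_sub_mul_prod_range {m s : ℕ} (hs : s ≤ m) :
    qpoch q (m - s) * ∏ j ∈ range s, (1 - q ^ (m - j)) = qpoch q m := by
  obtain ⟨d, rfl⟩ : ∃ d, m = d + s := ⟨m - s, by omega⟩
  rw [Nat.add_sub_cancel, qpoch, qpoch, prod_range_add, ← prod_range_reflect _ s]
  congr 1
  exact prod_congr rfl fun j hj => by rw [mem_range] at hj; congr 2; omega

end QAnalogues

lemma one_sub_X_pow_succ_ne_zero (a : ℕ) : (1 - (RatFunc.X : RatFunc ℚ) ^ (a + 1)) ≠ 0 := by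
  rw [← RatFunc.algebraMap_X, ← map_pow, ← map_one (algebraMap (Polynomial ℚ) (RatFunc ℚ)),
    ← map_sub]
  refine (map_ne_zero_iff _ (IsFractionRing.injective _ _)).mpr fun h => ?_
  simpa using congrArg (Polynomial.coeff · 0) h

lemma qpoch_X_ne_zero (n : ℕ) : qpoch (RatFunc.X : RatFunc ℚ) n ≠ 0 :=
  prod_ne_zero_iff.mpr fun a _ => one_sub_X_pow_succ_ne_zero a

lemma mem_hstrips {n l : ℕ} {mu lam : Fin n → ℕ} :
    lam ∈ hstrips mu l ↔ (∀ i, mu i ≤ lam i) ∧ (∀ i j : Fin n, i.1 + 1 = j.1 → lam j ≤ mu i)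
      ∧ ∑ i, (lam i - mu i) = l := by
  refine ⟨fun h => (mem_filter.mp h).2, fun h => mem_filter.mpr ⟨?_, h⟩⟩
  obtain ⟨hle, -, hsum⟩ := h
  have hbound (i : Fin n) : lam i < mu i + l + 1 := by
    have := hsum ▸ single_le_sum (fun j _ => Nat.zero_le (lam j - mu j)) (mem_univ i)
    omega
  exact mem_image.mpr ⟨fun i => ⟨lam i, hbound i⟩, mem_univ _, rfl⟩

section TwoRow

variable {n : ℕ}

def twoRow (n a b : ℕ) : Fin (n + 2) → ℕ :=
  fun r => if r = 0 then a else if r = 1 then b else 0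

lemma Fin.two_le_val_of_ne {i : Fin (n + 2)} (h₀ : i ≠ 0) (h₁ : i ≠ 1) : 2 ≤ (i : ℕ) := by
  simp only [ne_eq, Fin.ext_iff, Fin.val_zero, Fin.val_one] at h₀ h₁
  omega

@[simp] lemma twoRow_apply_zero (a b : ℕ) : twoRow n a b 0 = a := rfl

@[simp] lemma twoRow_apply_one (a b : ℕ) : twoRow n a b 1 = b := by
  simp [twoRow]

lemma twoRow_apply_of_ne {i : Fin (n + 2)} (a b : ℕ) (h₀ : i ≠ 0) (h₁ : i ≠ 1) :
    twoRow n a b i = 0 := by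
  simp [twoRow, h₀, h₁]

lemma twoRow_zero_right (a : ℕ) : twoRow n a 0 = fun r => if r = 0 then a else 0 := by
  funext r
  simp [twoRow]

lemma twoRow_antitone {a b : ℕ} (hba : b ≤ a) : Antitone (twoRow n a b) := by
  intro i j hij
  simp only [twoRow, Fin.ext_iff, Fin.val_zero, Fin.val_one]
  rw [Fin.le_def] at hij
  split_ifs <;> omega

lemma card_filter_lt_twoRow (a b j : ℕ) :
    #{i | j < twoRow n a b i} = (if j < a then 1 else 0) + (if j < b then 1 else 0) := by
  rw [card_filter, Fintype.sum_eq_add (0 : Fin (n + 2)) 1 zero_ne_one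
    fun i ⟨h₀, h₁⟩ => by simp [twoRow_apply_of_ne a b h₀ h₁]]
  simp only [twoRow_apply_zero, twoRow_apply_one]
  rfl

lemma prod_b0_twoRow {a b : ℕ} (hba : b ≤ a) (j : ℕ) :
    ∏ i, b0 (twoRow n a b) i j
      = (if b ≤ j ∧ j < a then (1 - RatFunc.X ^ (a - j))⁻¹ else 1)
        * (if j < b then (1 - RatFunc.X ^ (b - j))⁻¹ else 1) := by
  rw [Fintype.prod_eq_mul (0 : Fin (n + 2)) 1 zero_ne_one
    fun i ⟨h₀, h₁⟩ => by simp [b0, twoRow_apply_of_ne a b h₀ h₁]]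
  simp only [b0, card_filter_lt_twoRow, twoRow_apply_zero, twoRow_apply_one, Fin.val_zero,
    Fin.val_one]
  congr 1 <;> split_ifs <;> first | rfl | omega

end TwoRow

lemma hstrips_twoRow_zero (n m k : ℕ) :
    hstrips (twoRow n m 0) k = (range (min m k + 1)).image fun s => twoRow n (m + k - s) s := by
  ext lam
  simp only [mem_hstrips, mem_image, mem_range]
  constructor
  · rintro ⟨hle, hinter, hsum⟩
    have hvanish (i : Fin (n + 2)) (h₀ : i ≠ 0) (h₁ : i ≠ 1) : lam i = 0 := by
      have h2 := Fin.two_le_val_of_ne h₀ h₁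
      have := hinter ⟨i - 1, by omega⟩ i (Nat.sub_add_cancel (by omega))
      simp only [twoRow, Fin.ext_iff, Fin.val_zero, Fin.val_one] at this
      split_ifs at this <;> omega
    have h₁ := hinter 0 1 (by simp)
    have h₀ := hle 0
    rw [Fintype.sum_eq_add (0 : Fin (n + 2)) 1 zero_ne_one
      fun i ⟨h₀, h₁⟩ => by simp [hvanish i h₀ h₁]] at hsum
    simp only [twoRow_apply_zero, twoRow_apply_one] at h₀ h₁ hsum
    refine ⟨lam 1, by omega, funext fun i => ?_⟩
    by_cases hi₀ : i = 0
    · subst hi₀; simp only [twoRow_apply_zero]; omega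
    by_cases hi₁ : i = 1
    · subst hi₁; rw [twoRow_apply_one]
    rw [twoRow_apply_of_ne _ _ hi₀ hi₁, hvanish i hi₀ hi₁]
  · rintro ⟨s, hs, rfl⟩
    refine ⟨fun i => ?_, fun i j hij => ?_, ?_⟩
    · simp only [twoRow, Fin.ext_iff, Fin.val_zero, Fin.val_one]
      split_ifs <;> omega
    · simp only [twoRow, Fin.ext_iff, Fin.val_zero, Fin.val_one]
      split_ifs <;> omega
    · rw [Fintype.sum_eq_add (0 : Fin (n + 2)) 1 zero_ne_one
        fun i ⟨h₀, h₁⟩ => by simp [twoRow_apply_of_ne _ _ h₀ h₁]]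
      simp only [twoRow_apply_zero, twoRow_apply_one]
      omega

section PieriCoefficient

variable {n : ℕ}

lemma exists_column_twoRow_iff {a b c j : ℕ} :
    (∃ i, j < twoRow n a b i ∧ twoRow n c 0 i ≤ j) ↔ j < b ∨ (c ≤ j ∧ j < a) := by
  constructor
  · rintro ⟨i, hlam, hmu⟩
    simp only [twoRow] at hlam hmu
    split_ifs at hlam hmu <;> omega
  · rintro (h | h)
    · exact ⟨1, by simpa using h, by simp [twoRow]⟩
    · exact ⟨0, by simpa using h.2, by simpa using h.1⟩

lemma phi0_factor_twoRow {a b c : ℕ} (hbc : b ≤ c) (hca : c ≤ a) (j : ℕ) :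
    (if ∃ i, j < twoRow n a b i ∧ twoRow n c 0 i ≤ j
      then ∏ i, b0 (twoRow n a b) i j * (b0 (twoRow n c 0) i j)⁻¹ else 1)
      = (if j < b then (1 - RatFunc.X ^ (c - j)) / (1 - RatFunc.X ^ (b - j)) else 1)
        * (if c ≤ j ∧ j < a then (1 - RatFunc.X ^ (a - j))⁻¹ else 1) := by
  rw [prod_mul_distrib, prod_inv_distrib, prod_b0_twoRow (by omega),
    prod_b0_twoRow (Nat.zero_le c)]
  simp only [exists_column_twoRow_iff]
  split_ifs <;> first | omega | simp [div_eq_mul_inv, mul_comm]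

lemma phi0_twoRow {N a b c : ℕ} (hbc : b ≤ c) (hca : c ≤ a) (haN : a ≤ N) :
    phi0 N (twoRow n a b) (twoRow n c 0)
      = (∏ j ∈ range b, (1 - RatFunc.X ^ (c - j)))
          / (qpoch RatFunc.X b * qpoch RatFunc.X (a - c)) := by
  have hlow : {j ∈ range N | j < b} = range b := by
    ext j; simp only [mem_filter, mem_range]; omega
  have hhigh : {j ∈ range N | c ≤ j ∧ j < a} = Ico c a := by
    ext j; simp only [mem_filter, mem_range, mem_Ico]; omega
  have hend : ∏ j ∈ range (a - c), (1 - (RatFunc.X : RatFunc ℚ) ^ (a - (c + j)))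
      = qpoch RatFunc.X (a - c) := by
    rw [← prod_range_one_sub_pow_sub]
    exact prod_congr rfl fun j _ => by rw [Nat.sub_add_eq]
  rw [phi0, prod_congr rfl fun j _ => phi0_factor_twoRow hbc hca j, prod_mul_distrib,
    ← prod_filter, ← prod_filter, hlow, hhigh, prod_div_distrib, prod_range_one_sub_pow_sub,
    prod_Ico_eq_prod_range, prod_inv_distrib, hend]
  ring

lemma qpoch_mul_phi0_twoRow {m k s : ℕ} (hsm : s ≤ m) (hsk : s ≤ k) :
    qpoch RatFunc.X k * phi0 (m + k) (twoRow n (m + k - s) s) (twoRow n m 0)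
      = qbinom RatFunc.X k s * qbinom RatFunc.X m s * qpoch RatFunc.X s := by
  rw [phi0_twoRow hsm (by omega) (by omega), show m + k - s - m = k - s by omega,
    ← qbinom_mul_qpoch_mul_qpoch _ hsk]
  have hm : qbinom RatFunc.X m s * qpoch RatFunc.X s
      = ∏ j ∈ range s, (1 - RatFunc.X ^ (m - j)) :=
    mul_left_cancel₀ (qpoch_X_ne_zero (m - s)) <| by
      rw [qpoch_sub_mul_prod_range _ hsm, ← qbinom_mul_qpoch_mul_qpoch _ hsm]
      ring
  rw [← hm]
  have := qpoch_X_ne_zero s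
  have := qpoch_X_ne_zero (k - s)
  field_simp

end PieriCoefficient

theorem stmt7_general {A : Type} [CommRing A] [Algebra (RatFunc ℚ) A] (n m k : ℕ)
    (hn : 1 ≤ n)
    (P : (Fin (n+1) → ℕ) → A) (g : ℕ → A)
    (hPg : ∀ l : ℕ, P (fun r => if r = 0 then l else 0)
      = algebraMap (RatFunc ℚ) A (∏ a ∈ Finset.range l, (1 - RatFunc.X ^ (a + 1))) * g l)
    (hPieri : ∀ (mu : Fin (n+1) → ℕ), Antitone mu → ∀ l : ℕ,
      P mu * g l = ∑ lam ∈ hstrips mu l,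
        algebraMap (RatFunc ℚ) A (phi0 (mu 0 + l) lam mu) * P lam) :
    P (fun r => if r = 0 then m else 0) * P (fun r => if r = 0 then k else 0)
      = ∑ i ∈ Finset.range (min m k + 1),
          algebraMap (RatFunc ℚ) A (qbinom (RatFunc.X : RatFunc ℚ) k i
              * qbinom (RatFunc.X : RatFunc ℚ) m i
              * ∏ a ∈ Finset.range i, (1 - RatFunc.X ^ (a + 1)))
            * P (fun r => if r = 0 then m + k - i else if r = 1 then i else 0) := by
  obtain ⟨n, rfl⟩ : ∃ n', n = n' + 1 := ⟨n - 1, by omega⟩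
  have hinj : Set.InjOn (fun s => twoRow n (m + k - s) s) (range (min m k + 1)) :=
    fun s _ t _ hst => by simpa using congrFun hst 1
  rw [← twoRow_zero_right m]
  calc P (twoRow n m 0) * P (fun r => if r = 0 then k else 0)
      = algebraMap (RatFunc ℚ) A (qpoch RatFunc.X k) * (P (twoRow n m 0) * g k) := by
        rw [hPg k, qpoch]; ring
    _ = ∑ s ∈ range (min m k + 1), algebraMap (RatFunc ℚ) A
          (qpoch RatFunc.X k * phi0 (m + k) (twoRow n (m + k - s) s) (twoRow n m 0))
            * P (twoRow n (m + k - s) s) := by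
        rw [hPieri _ (twoRow_antitone (Nat.zero_le m)), hstrips_twoRow_zero, sum_image hinj,
          mul_sum, twoRow_apply_zero]
        simp only [map_mul, mul_assoc]
    _ = _ := sum_congr rfl fun s hs => by
        have := mem_range.mp hs
        rw [qpoch_mul_phi0_twoRow (by omega) (by omega)]; rfl

theorem stmt7 {A : Type} [CommRing A] [Algebra (RatFunc ℚ) A] (n m k : ℕ)
    (hn : 1 ≤ n) (hm : 0 < m) (hk : 0 < k)
    (P : (Fin (n+1) → ℕ) → A) (g : ℕ → A)
    (hPg : ∀ l : ℕ, P (fun r => if r = 0 then l else 0)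
      = algebraMap (RatFunc ℚ) A (∏ a ∈ Finset.range l, (1 - RatFunc.X ^ (a + 1))) * g l)
    (hPieri : ∀ (mu : Fin (n+1) → ℕ), Antitone mu → ∀ l : ℕ,
      P mu * g l = ∑ lam ∈ hstrips mu l,
        algebraMap (RatFunc ℚ) A (phi0 (mu 0 + l) lam mu) * P lam) :
    P (fun r => if r = 0 then m else 0) * P (fun r => if r = 0 then k else 0)
      = ∑ i ∈ Finset.range (min m k + 1),
          algebraMap (RatFunc ℚ) A (qbinom (RatFunc.X : RatFunc ℚ) k i
              * qbinom (RatFunc.X : RatFunc ℚ) m i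
              * ∏ a ∈ Finset.range i, (1 - RatFunc.X ^ (a + 1)))
            * P (fun r => if r = 0 then m + k - i else if r = 1 then i else 0) :=
  stmt7_general n m k hn P g hPg hPieri
end

section
/- For the Pieri coefficient at t = 0: if μ = (k,k,…,k,0) (n copies of k) and λ(i) = (k+m-i, k, …, k, i) with 0 ≤ i ≤ min(m,k), then φ_{λ(i)/μ}(q,0) = [(1-q^k)(1-q^{k-1})⋯(1-q^{k-i+1})] / [(1-q)(1-q^2)⋯(1-q^{m-i}) · (1-q)(1-q^2)⋯(1-q^i)]. -/
open Finset

theorem stmt8 (n m k i : ℕ) (hn : 1 ≤ n) (him : i ≤ m) (hik : i ≤ k) :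
    phi0 (k + m)
      (fun r : Fin (n+1) => if r = 0 then k + m - i else if r = Fin.last n then i else k)
      (fun r : Fin (n+1) => if r = Fin.last n then 0 else k)
    = (∏ a ∈ Finset.range i, (1 - RatFunc.X ^ (k - a)))
        * (∏ a ∈ Finset.range (m - i), (1 - (RatFunc.X : RatFunc ℚ) ^ (a + 1)))⁻¹
        * (∏ a ∈ Finset.range i, (1 - (RatFunc.X : RatFunc ℚ) ^ (a + 1)))⁻¹ := by
  set lam : Fin (n+1) → ℕ :=
    fun r => if r = 0 then k + m - i else if r = Fin.last n then i else k with hlam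
  set mu : Fin (n+1) → ℕ := fun r => if r = Fin.last n then 0 else k with hmu
  have h0last : (0 : Fin (n+1)) ≠ Fin.last n := by
    simp [Fin.ext_iff]; omega
  have r1lt : n - 1 < n + 1 := by omega
  have hr1last : (⟨n-1, r1lt⟩ : Fin (n+1)) ≠ Fin.last n := by simp [Fin.ext_iff]; omega
  have l0 : lam 0 = k + m - i := by simp [hlam]
  have llast : lam (Fin.last n) = i := by
    simp only [hlam]
    rw [if_neg (Ne.symm h0last)]
    simp
  have lmid : ∀ r : Fin (n+1), r ≠ 0 → r ≠ Fin.last n → lam r = k := by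
    intro r h h'
    simp only [hlam]
    rw [if_neg h, if_neg h']
  have mlast : mu (Fin.last n) = 0 := by simp [hmu]
  have mne : ∀ r : Fin (n+1), r ≠ Fin.last n → mu r = k := by
    intro r h
    simp only [hmu]
    rw [if_neg h]
  have cardmu : ∀ j, (univ.filter (fun r : Fin (n+1) => j < mu r)).card
      = if j < k then n else 0 := by
    intro j
    by_cases hj : j < k
    · rw [if_pos hj]
      have h1 : (univ.filter (fun r : Fin (n+1) => j < mu r))
          = univ.filter (fun r : Fin (n+1) => r ≠ Fin.last n) := by
        apply filter_congr; intro r _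
        rcases eq_or_ne r (Fin.last n) with h | h
        · subst h; simp [mlast]
        · simp [mne r h, h, hj]
      rw [h1, filter_ne', card_erase_of_mem (mem_univ _), card_univ, Fintype.card_fin]
      omega
    · rw [if_neg hj, card_eq_zero, filter_eq_empty_iff]
      intro r _
      rcases eq_or_ne r (Fin.last n) with h | h
      · subst h; rw [mlast]; omega
      · rw [mne r h]; omega
  have cardlamA : ∀ j, j < i →
      (univ.filter (fun r : Fin (n+1) => j < lam r)).card = n + 1 := by
    intro j hj
    have h1 : (univ.filter (fun r : Fin (n+1) => j < lam r)) = univ := by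
      rw [filter_eq_self]
      intro r _
      rcases eq_or_ne r 0 with h | h
      · subst h; rw [l0]; omega
      · rcases eq_or_ne r (Fin.last n) with h' | h'
        · subst h'; rw [llast]; omega
        · rw [lmid r h h']; omega
    rw [h1, card_univ, Fintype.card_fin]
  have cardlamB : ∀ j, k ≤ j → j < k + m - i →
      (univ.filter (fun r : Fin (n+1) => j < lam r)).card = 1 := by
    intro j hj hj'
    have h1 : (univ.filter (fun r : Fin (n+1) => j < lam r)) = {0} := by
      ext r
      simp only [mem_filter, mem_univ, true_and, mem_singleton]
      constructor
      · intro h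
        by_contra h0
        rcases eq_or_ne r (Fin.last n) with h' | h'
        · subst h'; rw [llast] at h; omega
        · rw [lmid r h0 h'] at h; omega
      · intro h; subst h; rw [l0]; omega
    rw [h1, card_singleton]
  have prodlamA : ∀ j, j < i →
      (∏ r : Fin (n+1), b0 lam r j) = (1 - RatFunc.X ^ (i - j))⁻¹ := by
    intro j hj
    rw [Finset.prod_eq_single (Fin.last n)]
    · unfold b0
      rw [cardlamA j hj, llast, if_pos ⟨hj, by simp⟩]
    · intro r _ hr
      unfold b0
      rw [cardlamA j hj, if_neg]
      rintro ⟨-, hc⟩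
      exact hr (Fin.ext (by simp only [Fin.val_last]; omega))
    · intro h; exact absurd (mem_univ _) h
  have prodmuA : ∀ j, j < k →
      (∏ r : Fin (n+1), b0 mu r j) = (1 - RatFunc.X ^ (k - j))⁻¹ := by
    intro j hj
    rw [Finset.prod_eq_single (⟨n-1, r1lt⟩ : Fin (n+1))]
    · unfold b0
      rw [cardmu j, if_pos hj, mne _ hr1last, if_pos ⟨hj, show n = n - 1 + 1 by omega⟩]
    · intro r _ hr
      unfold b0
      rw [cardmu j, if_pos hj, if_neg]
      rintro ⟨-, hc⟩
      refine hr (Fin.ext ?_)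
      show r.1 = n - 1
      omega
    · intro h; exact absurd (mem_univ _) h
  have prodmuB : ∀ j, k ≤ j → (∏ r : Fin (n+1), b0 mu r j) = 1 := by
    intro j hj
    apply Finset.prod_eq_one
    intro r _
    unfold b0
    rw [cardmu j, if_neg (show ¬ j < k by omega), if_neg]
    rintro ⟨-, hc⟩
    omega
  have prodlamB : ∀ j, k ≤ j → j < k + m - i →
      (∏ r : Fin (n+1), b0 lam r j) = (1 - RatFunc.X ^ (k + m - i - j))⁻¹ := by
    intro j hj hj'
    rw [Finset.prod_eq_single (0 : Fin (n+1))]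
    · unfold b0
      rw [cardlamB j hj hj', l0, if_pos ⟨hj', by simp⟩]
    · intro r _ hr
      unfold b0
      rw [cardlamB j hj hj', if_neg]
      rintro ⟨-, hc⟩
      refine hr (Fin.ext ?_)
      simp only [Fin.val_zero]
      omega
    · intro h; exact absurd (mem_univ _) h
  have key : phi0 (k + m) lam mu
      = ∏ j ∈ Finset.range (k + m),
          ((if j < i then (1 - (RatFunc.X : RatFunc ℚ) ^ (i - j))⁻¹
              * (1 - RatFunc.X ^ (k - j)) else 1)
            * (if k ≤ j ∧ j < k + m - i
                then (1 - (RatFunc.X : RatFunc ℚ) ^ (k + m - i - j))⁻¹ else 1)) := by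
    unfold phi0
    apply Finset.prod_congr rfl
    intro j hj
    rw [mem_range] at hj
    by_cases hji : j < i
    · rw [if_pos, if_pos hji, if_neg (by omega : ¬ (k ≤ j ∧ j < k + m - i)), mul_one]
      · rw [Finset.prod_mul_distrib, Finset.prod_inv_distrib,
          prodlamA j hji, prodmuA j (by omega), inv_inv]
      · exact ⟨Fin.last n, by rw [llast]; omega, by rw [mlast]; omega⟩
    · by_cases hjk : k ≤ j ∧ j < k + m - i
      · rw [if_pos, if_neg hji, if_pos hjk, one_mul]
        · rw [Finset.prod_mul_distrib, Finset.prod_inv_distrib,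
            prodlamB j hjk.1 hjk.2, prodmuB j hjk.1, inv_one, mul_one]
        · exact ⟨0, by rw [l0]; omega, by rw [mne 0 h0last]; omega⟩
      · rw [if_neg, if_neg hji, if_neg hjk, mul_one]
        rintro ⟨r, hr1, hr2⟩
        rcases eq_or_ne r 0 with h0 | h0
        · subst h0
          rw [l0] at hr1
          rw [mne 0 h0last] at hr2
          omega
        · rcases eq_or_ne r (Fin.last n) with hL | hL
          · subst hL
            rw [llast] at hr1
            omega
          · rw [lmid r h0 hL] at hr1
            rw [mne r hL] at hr2
            omega
  rw [key, Finset.prod_mul_distrib]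
  have hP1 : (∏ j ∈ Finset.range (k+m),
      (if j < i then (1 - (RatFunc.X : RatFunc ℚ) ^ (i - j))⁻¹
          * (1 - RatFunc.X ^ (k - j)) else 1))
      = (∏ a ∈ Finset.range i, (1 - (RatFunc.X : RatFunc ℚ) ^ (a+1)))⁻¹
        * ∏ a ∈ Finset.range i, (1 - RatFunc.X ^ (k - a)) := by
    rw [← Finset.prod_subset (Finset.range_subset_range.2 (by omega : i ≤ k + m))
        (fun x _ hx => by rw [if_neg (by simpa using hx)])]
    rw [Finset.prod_congr rfl (fun j hj => if_pos (mem_range.mp hj)),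
      Finset.prod_mul_distrib]
    congr 1
    have e : ∏ j ∈ Finset.range i, (1 - (RatFunc.X : RatFunc ℚ) ^ (i - j))⁻¹
        = ∏ j ∈ Finset.range i, (1 - (RatFunc.X : RatFunc ℚ) ^ ((i-1-j) + 1))⁻¹ := by
      refine Finset.prod_congr rfl (fun j hj => ?_)
      rw [mem_range] at hj
      have : i - j = i - 1 - j + 1 := by omega
      rw [this]
    rw [e, Finset.prod_range_reflect (fun a => (1 - (RatFunc.X : RatFunc ℚ) ^ (a+1))⁻¹) i,
      Finset.prod_inv_distrib]
  have hP3 : (∏ j ∈ Finset.range (k+m),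
      (if k ≤ j ∧ j < k + m - i
        then (1 - (RatFunc.X : RatFunc ℚ) ^ (k + m - i - j))⁻¹ else 1))
      = (∏ a ∈ Finset.range (m-i), (1 - (RatFunc.X : RatFunc ℚ) ^ (a+1)))⁻¹ := by
    rw [← Finset.prod_subset (show Finset.Ico k (k+m-i) ⊆ Finset.range (k+m) by
        intro x hx; rw [Finset.mem_Ico] at hx; rw [Finset.mem_range]; omega)
        (fun x _ hx => by rw [if_neg (by simpa [Finset.mem_Ico] using hx)])]
    rw [Finset.prod_congr rfl (fun j hj => if_pos (Finset.mem_Ico.mp hj)),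
      Finset.prod_Ico_eq_prod_range]
    have e1 : k + m - i - k = m - i := by omega
    rw [e1]
    have e : ∏ t ∈ Finset.range (m-i), (1 - (RatFunc.X : RatFunc ℚ) ^ (k + m - i - (k + t)))⁻¹
        = ∏ t ∈ Finset.range (m-i), (1 - (RatFunc.X : RatFunc ℚ) ^ ((m-i-1-t) + 1))⁻¹ := by
      refine Finset.prod_congr rfl (fun t ht => ?_)
      rw [mem_range] at ht
      have : k + m - i - (k + t) = m - i - 1 - t + 1 := by omega
      rw [this]
    rw [e, Finset.prod_range_reflect (fun a => (1 - (RatFunc.X : RatFunc ℚ) ^ (a+1))⁻¹) (m-i),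
      Finset.prod_inv_distrib]
  rw [hP1, hP3]
  ring
end

section
/- Assume the character formula ch_gr W_{M-i}((m-i)ω_1 + (k-i)ω_2) = ∑_{r=0}^{L-i} (-1)^r [L-i choose r]_q q^{r(M-i) - r(r-1)/2} ch_gr W_loc((m-i-r)ω_1 + (k-i-r)ω_2) formally, with M = max(m,k), L = min(m,k). Then the coefficient of ch_gr W_loc((m-j)ω_1 + (k-j)ω_2) in ∑_{i=0}^{L} [L choose i]_q ch_gr W_{M-i}(mω_1 + kω_2 - iθ) equals [M choose j]_q [L choose j]_q (1-q)(1-q^2)⋯(1-q^j) for each 0 ≤ j ≤ L. -/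
open Finset Polynomial

namespace Stmt11Aux

noncomputable def fk (k : ℕ) : Polynomial ℤ := ∏ i ∈ Finset.range k, (1 - Polynomial.X ^ (i + 1))

def tri (r : ℕ) : ℕ := ∑ i ∈ Finset.range (r + 1), i

lemma tri_succ (r : ℕ) : tri (r + 1) = tri r + (r + 1) := Finset.sum_range_succ _ _

lemma qbinom_zero {R : Type*} [CommRing R] (q : R) (n : ℕ) : qbinom q n 0 = 1 := by
  cases n <;> rfl

lemma qbinom_succ_succ {R : Type*} [CommRing R] (q : R) (n r : ℕ) :
    qbinom q (n + 1) (r + 1) = qbinom q n r + q ^ (r + 1) * qbinom q n (r + 1) := rfl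

lemma qbinom_eq_zero {R : Type*} [CommRing R] (q : R) :
    ∀ {n k : ℕ}, n < k → qbinom q n k = 0 := by
  intro n
  induction n with
  | zero =>
    intro k hk
    cases k with
    | zero => omega
    | succ k => rfl
  | succ n ih =>
    intro k hk
    cases k with
    | zero => omega
    | succ k =>
      rw [qbinom_succ_succ, ih (by omega), ih (by omega)]
      ring

lemma fk_succ (k : ℕ) : fk (k + 1) = fk k * (1 - Polynomial.X ^ (k + 1)) :=
  Finset.prod_range_succ _ _

lemma one_sub_X_pow_ne_zero (i : ℕ) : (1 - Polynomial.X ^ (i + 1) : Polynomial ℤ) ≠ 0 := by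
  intro h
  have h1 : (Polynomial.X : Polynomial ℤ) ^ (i + 1) = 1 := (sub_eq_zero.mp h).symm
  have := congrArg Polynomial.natDegree h1
  simp at this

lemma fk_ne_zero (k : ℕ) : fk k ≠ 0 := by
  unfold fk
  rw [Finset.prod_ne_zero_iff]
  intro i _
  exact one_sub_X_pow_ne_zero i

/-- Key product formula: `[n choose k]_q * (1-q)⋯(1-q^k) = ∏_{i<k} (1 - q^(n-i))`.
Holds without the hypothesis `k ≤ n` (both sides vanish otherwise). -/
lemma qbinom_mul_fk : ∀ (n k : ℕ),
    qbinom (Polynomial.X : Polynomial ℤ) n k * fk k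
      = ∏ i ∈ Finset.range k, (1 - Polynomial.X ^ (n - i)) := by
  intro n
  induction n with
  | zero =>
    intro k
    cases k with
    | zero => simp [qbinom_zero, fk]
    | succ k =>
      have h0 : qbinom (Polynomial.X : Polynomial ℤ) 0 (k + 1) = 0 := rfl
      rw [h0, zero_mul]
      refine (Finset.prod_eq_zero (Finset.mem_range.mpr (Nat.succ_pos k)) ?_).symm
      simp
  | succ n ih =>
    intro k
    cases k with
    | zero => simp [qbinom_zero, fk]
    | succ k =>
      have hP := ih k
      have hP1 := ih (k + 1)
      rw [fk_succ, Finset.prod_range_succ] at hP1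
      have hR : (∏ i ∈ Finset.range (k + 1), (1 - (Polynomial.X : Polynomial ℤ) ^ (n + 1 - i)))
          = (∏ i ∈ Finset.range k, (1 - (Polynomial.X : Polynomial ℤ) ^ (n - i)))
            * (1 - Polynomial.X ^ (n + 1)) := by
        rw [Finset.prod_range_succ']
        congr 1
        exact Finset.prod_congr rfl fun i _ => by rw [Nat.succ_sub_succ]
      rw [qbinom_succ_succ, fk_succ, hR]
      rcases le_or_gt k n with h | h
      · have hp : (Polynomial.X : Polynomial ℤ) ^ (k + 1) * Polynomial.X ^ (n - k)
            = Polynomial.X ^ (n + 1) := by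
          rw [← pow_add]; congr 1; omega
        linear_combination (1 - (Polynomial.X : Polynomial ℤ) ^ (k + 1)) * hP
          + (Polynomial.X : Polynomial ℤ) ^ (k + 1) * hP1
          - (∏ i ∈ Finset.range k, (1 - (Polynomial.X : Polynomial ℤ) ^ (n - i))) * hp
      · have hP0 : (∏ i ∈ Finset.range k, (1 - (Polynomial.X : Polynomial ℤ) ^ (n - i))) = 0 :=
          Finset.prod_eq_zero (Finset.mem_range.mpr h) (by simp [Nat.sub_self])
        linear_combination (1 - (Polynomial.X : Polynomial ℤ) ^ (k + 1)) * hP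
          + (Polynomial.X : Polynomial ℤ) ^ (k + 1) * hP1
          + ((1 - (Polynomial.X : Polynomial ℤ) ^ (k + 1))
              + (Polynomial.X : Polynomial ℤ) ^ (k + 1) * (1 - Polynomial.X ^ (n - k))
              - (1 - Polynomial.X ^ (n + 1))) * hP0

/-- Splitting: `∏_{i<m}(1-q^{n-i}) * (1-q)⋯(1-q^{n-m}) = (1-q)⋯(1-q^n)` for `m ≤ n`. -/
lemma prod_mul_fk {m n : ℕ} (h : m ≤ n) :
    (∏ i ∈ Finset.range m, (1 - (Polynomial.X : Polynomial ℤ) ^ (n - i))) * fk (n - m)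
      = fk n := by
  have h1 : (∏ i ∈ Finset.range m, (1 - (Polynomial.X : Polynomial ℤ) ^ (n - i)))
      = ∏ i ∈ Finset.range m, (1 - (Polynomial.X : Polynomial ℤ) ^ (n - m + i + 1)) := by
    rw [← Finset.prod_range_reflect]
    exact Finset.prod_congr rfl fun i hi => by
      rw [Finset.mem_range] at hi; congr 2; omega
  rw [h1]
  unfold fk
  rw [mul_comm, ← Finset.prod_range_add]
  rw [show n - m + m = n by omega]

lemma qbinom_symm {n k : ℕ} (h : k ≤ n) :
    qbinom (Polynomial.X : Polynomial ℤ) n (n - k) = qbinom (Polynomial.X : Polynomial ℤ) n k := by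
  have hc : fk (n - k) * fk k ≠ 0 := mul_ne_zero (fk_ne_zero _) (fk_ne_zero _)
  apply mul_right_cancel₀ hc
  have e1 : qbinom (Polynomial.X : Polynomial ℤ) n (n - k) * (fk (n - k) * fk k)
      = (qbinom (Polynomial.X : Polynomial ℤ) n (n - k) * fk (n - k)) * fk k := by ring
  have e2 : qbinom (Polynomial.X : Polynomial ℤ) n k * (fk (n - k) * fk k)
      = (qbinom (Polynomial.X : Polynomial ℤ) n k * fk k) * fk (n - k) := by ring
  rw [e1, e2, qbinom_mul_fk, qbinom_mul_fk]
  have h3 : fk k = fk (n - (n - k)) := by rw [show n - (n - k) = k by omega]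
  rw [h3, prod_mul_fk (by omega), prod_mul_fk h]

lemma qbinom_trinomial {L j r : ℕ} (hr : r ≤ j) (hj : j ≤ L) :
    qbinom (Polynomial.X : Polynomial ℤ) L (j - r)
        * qbinom (Polynomial.X : Polynomial ℤ) (L - (j - r)) r
      = qbinom (Polynomial.X : Polynomial ℤ) L j * qbinom (Polynomial.X : Polynomial ℤ) j r := by
  have hc : fk (j - r) * fk r ≠ 0 := mul_ne_zero (fk_ne_zero _) (fk_ne_zero _)
  apply mul_right_cancel₀ hc
  have e1 : qbinom (Polynomial.X : Polynomial ℤ) L (j - r)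
        * qbinom (Polynomial.X : Polynomial ℤ) (L - (j - r)) r * (fk (j - r) * fk r)
      = (qbinom (Polynomial.X : Polynomial ℤ) L (j - r) * fk (j - r))
        * (qbinom (Polynomial.X : Polynomial ℤ) (L - (j - r)) r * fk r) := by ring
  have e2 : qbinom (Polynomial.X : Polynomial ℤ) L j * qbinom (Polynomial.X : Polynomial ℤ) j r
        * (fk (j - r) * fk r)
      = qbinom (Polynomial.X : Polynomial ℤ) L j
        * ((qbinom (Polynomial.X : Polynomial ℤ) j r * fk r) * fk (j - r)) := by ring
  rw [e1, e2, qbinom_mul_fk, qbinom_mul_fk, qbinom_mul_fk, prod_mul_fk hr, qbinom_mul_fk L j]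
  have hsplit := Finset.prod_range_add
    (fun i => 1 - (Polynomial.X : Polynomial ℤ) ^ (L - i)) (j - r) r
  rw [show j - r + r = j by omega] at hsplit
  rw [hsplit]
  congr 1
  exact Finset.prod_congr rfl fun i _ => by congr 2; omega

/-- q-binomial theorem specialization:
`∑_r (-1)^r [j choose r]_q q^{a r + tri r} = ∏_{i<j}(1 - q^{a+1+i})`. -/
lemma qbt : ∀ (j a : ℕ),
    (∑ r ∈ Finset.range (j + 1),
        (-1 : Polynomial ℤ) ^ r * qbinom (Polynomial.X : Polynomial ℤ) j r
          * Polynomial.X ^ (a * r + tri r))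
      = ∏ i ∈ Finset.range j, (1 - (Polynomial.X : Polynomial ℤ) ^ (a + 1 + i)) := by
  intro j
  induction j with
  | zero => intro a; simp [qbinom_zero, tri]
  | succ j ih =>
    intro a
    rw [Finset.sum_range_succ']
    have h0 : (-1 : Polynomial ℤ) ^ 0 * qbinom (Polynomial.X : Polynomial ℤ) (j + 1) 0
        * Polynomial.X ^ (a * 0 + tri 0) = 1 := by
      simp [qbinom_zero, tri]
    rw [h0]
    set h : ℕ → Polynomial ℤ := fun t => (-1 : Polynomial ℤ) ^ t
      * qbinom (Polynomial.X : Polynomial ℤ) j t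
      * Polynomial.X ^ ((a + 1) * t + tri t) with hh
    have hterm : ∀ s ∈ Finset.range (j + 1),
        (-1 : Polynomial ℤ) ^ (s + 1) * qbinom (Polynomial.X : Polynomial ℤ) (j + 1) (s + 1)
          * Polynomial.X ^ (a * (s + 1) + tri (s + 1))
        = -(Polynomial.X ^ (a + 1) * h s) + h (s + 1) := by
      intro s _
      simp only [hh]
      rw [qbinom_succ_succ, tri_succ]
      ring
    rw [Finset.sum_congr rfl hterm, Finset.sum_add_distrib]
    have hneg : ∑ s ∈ Finset.range (j + 1), -(Polynomial.X ^ (a + 1) * h s)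
        = -((Polynomial.X : Polynomial ℤ) ^ (a + 1) * ∑ s ∈ Finset.range (j + 1), h s) := by
      rw [Finset.mul_sum, Finset.sum_neg_distrib]
    have hshift : ∑ s ∈ Finset.range (j + 1), h (s + 1)
        = (∑ t ∈ Finset.range (j + 1), h t) + h (j + 1) - h 0 := by
      have h1 := Finset.sum_range_succ h (j + 1)
      have h2 := Finset.sum_range_succ' h (j + 1)
      rw [h1] at h2
      linear_combination -h2
    have htop : h (j + 1) = 0 := by
      simp only [hh]
      rw [qbinom_eq_zero _ (by omega)]
      ring
    have hbot : h 0 = 1 := by simp [hh, qbinom_zero, tri]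
    have hS : (∑ t ∈ Finset.range (j + 1), h t)
        = ∏ i ∈ Finset.range j, (1 - (Polynomial.X : Polynomial ℤ) ^ (a + 1 + 1 + i)) := by
      simp only [hh]
      exact ih (a + 1)
    have hRHS : (∏ i ∈ Finset.range (j + 1), (1 - (Polynomial.X : Polynomial ℤ) ^ (a + 1 + i)))
        = (∏ i ∈ Finset.range j, (1 - (Polynomial.X : Polynomial ℤ) ^ (a + 1 + 1 + i)))
          * (1 - Polynomial.X ^ (a + 1)) := by
      rw [Finset.prod_range_succ']
      congr 1
      exact Finset.prod_congr rfl fun i _ => by congr 2; omega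
    rw [hneg, hshift, htop, hbot, hS, hRHS]
    ring

end Stmt11Aux

open Stmt11Aux
/-- The coefficient identity underlying Lemma 5.6 of the paper: for L ≤ M and 0 ≤ j ≤ L,
∑_{r=0}^{j} (-1)^r [L choose j-r]_q [L-(j-r) choose r]_q q^{r(M-j+r) - r(r-1)/2}
  = [M choose j]_q [L choose j]_q (1-q)⋯(1-q^j)
(here [L choose j-r]_q is written as [L choose L-(j-r)]_q using the symmetry of
Gaussian binomial coefficients, as in the paper). -/
theorem stmt11 (L M j : ℕ) (hLM : L ≤ M) (hj : j ≤ L) :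
    ∑ r ∈ Finset.range (j + 1),
        (-1 : Polynomial ℤ) ^ r * qbinom (Polynomial.X : Polynomial ℤ) L (L - (j - r))
          * qbinom (Polynomial.X : Polynomial ℤ) (L - (j - r)) r
          * Polynomial.X ^ (r * (M - j + r) - r * (r - 1) / 2)
      = qbinom (Polynomial.X : Polynomial ℤ) M j * qbinom (Polynomial.X : Polynomial ℤ) L j
          * ∏ i ∈ Finset.range j, (1 - Polynomial.X ^ (i + 1)) := by
  have hstep : ∀ r ∈ Finset.range (j + 1),
      (-1 : Polynomial ℤ) ^ r * qbinom (Polynomial.X : Polynomial ℤ) L (L - (j - r))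
          * qbinom (Polynomial.X : Polynomial ℤ) (L - (j - r)) r
          * Polynomial.X ^ (r * (M - j + r) - r * (r - 1) / 2)
        = qbinom (Polynomial.X : Polynomial ℤ) L j
          * ((-1 : Polynomial ℤ) ^ r * qbinom (Polynomial.X : Polynomial ℤ) j r
              * Polynomial.X ^ ((M - j) * r + tri r)) := by
    intro r hrm
    rw [Finset.mem_range] at hrm
    have hr : r ≤ j := by omega
    have he : r * (M - j + r) - r * (r - 1) / 2 = (M - j) * r + tri r := by
      have main : ∀ D T P Q E : ℕ, D * 2 = E → E + r = Q → T * 2 = Q + r →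
          P + Q - D = P + T := by intros; omega
      have d2 : r * (r - 1) / 2 * 2 = r * (r - 1) := by
        apply Nat.div_mul_cancel
        rcases r with _ | t
        · simp
        · rw [Nat.succ_sub_one, mul_comm]
          exact (Nat.even_mul_succ_self t).two_dvd
      have h2 : r * (r - 1) + r = r * r := by
        rcases r with _ | t
        · rfl
        · rw [Nat.succ_sub_one]; ring
      have t2 : tri r * 2 = r * r + r := by
        have := Finset.sum_range_id_mul_two (r + 1)
        simp only [tri]
        rw [this]; simp; ring
      rw [show r * (M - j + r) = (M - j) * r + r * r by ring]
      exact main (r * (r - 1) / 2) (tri r) ((M - j) * r) (r * r) (r * (r - 1)) d2 h2 t2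
    rw [qbinom_symm (show j - r ≤ L by omega), he]
    linear_combination ((-1 : Polynomial ℤ) ^ r * Polynomial.X ^ ((M - j) * r + tri r))
      * qbinom_trinomial hr hj
  rw [Finset.sum_congr rfl hstep, ← Finset.mul_sum, qbt j (M - j)]
  have hrev : (∏ i ∈ Finset.range j, (1 - (Polynomial.X : Polynomial ℤ) ^ (M - j + 1 + i)))
      = ∏ i ∈ Finset.range j, (1 - (Polynomial.X : Polynomial ℤ) ^ (M - i)) := by
    rw [← Finset.prod_range_reflect (fun i => 1 - (Polynomial.X : Polynomial ℤ) ^ (M - i)) j]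
    exact Finset.prod_congr rfl fun i hi => by
      rw [Finset.mem_range] at hi; congr 2; omega
  rw [hrev, ← qbinom_mul_fk M j]
  unfold fk
  ring
end

section
/- Let g be a simple Lie algebra with Chevalley generators, α ∈ Φ⁺, and s ∈ ℕ, r ∈ ℤ₊. Then in the universal enveloping algebra U(g[t]): (x_α ⊗ t)^{(s)} (y_α ⊗ 1)^{(r+s)} − (−1)^s ∑_{k≥0} y_α(r, s−k) P_α(u)_k lies in U(g[t]) n⁺[t], where P_α(u)_k is the coefficient of u^k in H_α(u) = exp(−∑_{r≥1} (h_α ⊗ t^r) u^r / r), X^{(p)} = X^p/p!, and y_α(r,s) = ∑ (y_α ⊗ 1)^{(b_0)}(y_α ⊗ t)^{(b_1)}⋯(y_α ⊗ t^s)^{(b_s)} over tuples (b_p) with ∑ b_p = r, ∑ p b_p = s. -/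
open scoped TensorProduct
open Polynomial

noncomputable section

variable (L : Type) [LieRing L] [LieAlgebra ℂ L]

/-- The current algebra `L[t] = L ⊗ ℂ[t]` of a complex Lie algebra `L`. -/
abbrev Cur (L : Type) [LieRing L] [LieAlgebra ℂ L] : Type := (Polynomial ℂ) ⊗[ℂ] L

instance : LieAlgebra ℂ (Cur L) where
  lie_smul c x y := by
    rw [← algebraMap_smul (Polynomial ℂ) c y, ← algebraMap_smul (Polynomial ℂ) c ⁅x, y⁆]
    exact @lie_smul (Polynomial ℂ) (Cur L) (Cur L) _ _ _ _ _ _ _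
      ((algebraMap ℂ (Polynomial ℂ)) c) x y

/-- The universal enveloping algebra `U(L[t])`. -/
abbrev UC (L : Type) [LieRing L] [LieAlgebra ℂ L] : Type :=
  UniversalEnvelopingAlgebra ℂ (Cur L)

/-- `z ⊗ t^r` as an element of `U(L[t])`. -/
def el {L : Type} [LieRing L] [LieAlgebra ℂ L] (r : ℕ) (z : L) : UC L :=
  UniversalEnvelopingAlgebra.ι ℂ ((Polynomial.X ^ r : Polynomial ℂ) ⊗ₜ[ℂ] z)

variable {L}

/-- Divided power `u^{(p)} = u^p/p!` in `U(L[t])`. -/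
def dp (u : UC L) (p : ℕ) : UC L := ((p.factorial : ℂ)⁻¹) • u ^ p

/-- The Garland element
`y(r,s) = ∑ (y⊗1)^{(b₀)} (y⊗t)^{(b₁)} ⋯ (y⊗tˢ)^{(b_s)}`,
summed over tuples `(b_p)` with `∑ b_p = r`, `∑ p b_p = s`. -/
def yrs (y : L) (r s : ℕ) : UC L :=
  ∑ b ∈ Finset.univ.filter
      (fun b : Fin (s+1) → Fin (r+1) =>
        (∑ p, (b p : ℕ)) = r ∧ (∑ p, p.1 * (b p : ℕ)) = s),
    (List.ofFn (fun p : Fin (s+1) => dp (el p.1 y) (b p))).prod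

/-- `P(u)_k`, the coefficient of `u^k` in `exp(-∑_{r≥1} (h ⊗ t^r) u^r / r)`:
explicitly `∑ ∏_p ((-1/p)·(h⊗t^p))^{b_p} / b_p!` over multiplicities `(b_p)_{p≥1}`
with `∑ p·b_p = k`. -/
def Pk (h : L) (k : ℕ) : UC L :=
  ∑ b ∈ Finset.univ.filter
      (fun b : Fin k → Fin (k+1) => (∑ p, (p.1 + 1) * (b p : ℕ)) = k),
    (List.ofFn (fun p : Fin k =>
      dp ((-(((p.1 + 1 : ℕ) : ℂ))⁻¹) • el (p.1 + 1) h) (b p))).prod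

/-!
Work with generating series in `U(L[t])⟦u⟧`: `Y(u) = ∑ₚ (y ⊗ tᵖ) uᵖ`, `H(u) = ∑ₚ (h ⊗ tᵖ⁺¹) uᵖ` and
`P(u) = ∑ₖ P_k uᵏ`. The `y ⊗ tᵖ` commute, `y(r, s)` is the coefficient of `uˢ` in the divided power
`Y^{(r)}`, and `H P = -P'`: both come from the counting identities
`∑ₚ (y ⊗ tᵖ) y(r, s - p) = (r + 1) y(r + 1, s)` and `∑ₚ (h ⊗ tᵖ⁺¹) P_{k-p} = -(k + 1) P_{k+1}`,
obtained by removing one part from a multiplicity vector in all possible ways.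

Since `[x ⊗ t, Y] = H` and `[H, Y] = -2 Y'`, the `sl₂` relations give
`[x ⊗ t, Y^{(r+1)}] = Y^{(r)} H - (Y^{(r)})'`, hence `[x ⊗ t, Y^{(r+1)}] P = -(Y^{(r)} P)'`.
Modulo the left ideal generated by the `x ⊗ tᵖ`, `(x ⊗ t) P_k ≡ 0` because the `h ⊗ tᵖ` commute with
`x ⊗ tᵠ` up to multiples of `x ⊗ tᵖ⁺ᵠ`. So multiplying the congruence
`(x ⊗ t)^{(s)} (y ⊗ 1)^{(r+s)} ≡ (-1)ˢ [uˢ] (Y^{(r)} P)` for `(s, r + 1)` on the left by `x ⊗ t`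
and dividing by `s + 1` gives it for `(s + 1, r)`.
-/

open scoped IsMulCommutative

section DividedPowers

variable {K A : Type*} [Field K]

lemma nsmul_right_injective_of_charZero [CharZero K] [AddCommGroup A] [Module K A] {n : ℕ}
    (hn : n ≠ 0) : Function.Injective (n • · : A → A) := fun a b h => by
  simp only [← Nat.cast_smul_eq_nsmul K] at h
  exact smul_right_injective A (Nat.cast_ne_zero.2 hn) h

variable (K) [Ring A] [Algebra K A]

def divPow (z : A) (m : ℕ) : A := ((m.factorial : K))⁻¹ • z ^ m

variable {K}

@[simp] lemma divPow_zero (z : A) : divPow K z 0 = 1 := by simp [divPow]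

@[simp] lemma divPow_one (z : A) : divPow K z 1 = z := by simp [divPow]

lemma map_divPow {B : Type*} [Ring B] [Algebra K B] (φ : A →ₐ[K] B) (z : A) (m : ℕ) :
    φ (divPow K z m) = divPow K (φ z) m := by
  rw [divPow, divPow, map_smul, map_pow]

lemma Commute.divPow_right {a z : A} (h : Commute a z) (m : ℕ) : Commute a (divPow K z m) :=
  (h.pow_right m).smul_right _

lemma map_one_eq_zero_of_leibniz (δ : A →+ A) (hδ : ∀ a b, δ (a * b) = δ a * b + a * δ b) :
    δ 1 = 0 := by
  simpa using hδ 1 1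

variable [CharZero K]

lemma mul_divPow (z : A) (m : ℕ) : z * divPow K z m = (m + 1) • divPow K z (m + 1) := by
  rw [divPow, divPow, mul_smul_comm, ← pow_succ', ← Nat.cast_smul_eq_nsmul K, smul_smul,
    Nat.factorial_succ, Nat.cast_mul, mul_inv, ← mul_assoc, Nat.cast_succ,
    mul_inv_cancel₀ (Nat.cast_add_one_ne_zero m), one_mul]

lemma eq_divPow_of_mul_eq_nsmul (z : A) {Y : ℕ → A} (h0 : Y 0 = 1)
    (hsucc : ∀ m, z * Y m = (m + 1) • Y (m + 1)) (m : ℕ) : Y m = divPow K z m := by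
  induction m with
  | zero => rw [h0, divPow_zero]
  | succ m ih =>
    refine nsmul_right_injective_of_charZero (K := K) m.succ_ne_zero ?_
    simp only [← hsucc, ← mul_divPow, ih]

lemma map_divPow_succ (δ : A →+ A) (hδ : ∀ a b, δ (a * b) = δ a * b + a * δ b) {z : A}
    (hz : Commute (δ z) z) (m : ℕ) : δ (divPow K z (m + 1)) = divPow K z m * δ z := by
  induction m with
  | zero => simp
  | succ m ih =>
    refine nsmul_right_injective_of_charZero (K := K) (m + 1).succ_ne_zero ?_
    simp only
    rw [← map_nsmul, ← mul_divPow, hδ, ih, (hz.divPow_right (m + 1)).eq, ← mul_assoc,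
      mul_divPow, smul_mul_assoc, succ_nsmul' _ (m + 1)]

lemma mul_map_divPow (δ : A →+ A) (hδ : ∀ a b, δ (a * b) = δ a * b + a * δ b) {z : A}
    (hz : Commute (δ z) z) (m : ℕ) : z * δ (divPow K z m) = m • (divPow K z m * δ z) := by
  cases m with
  | zero => simp [map_one_eq_zero_of_leibniz δ hδ]
  | succ m => rw [map_divPow_succ δ hδ hz, ← mul_assoc, mul_divPow, smul_mul_assoc]

lemma commutator_divPow_succ (D : A →+ A) (hD : ∀ a b, D (a * b) = D a * b + a * D b)
    {e f h : A} (hef : e * f - f * e = h) (hhf : h * f - f * h = (-2 : K) • D f)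
    (hf : Commute (D f) f) (m : ℕ) :
    e * divPow K f (m + 1) - divPow K f (m + 1) * e = divPow K f m * h - D (divPow K f m) := by
  induction m with
  | zero => simp [hef, map_one_eq_zero_of_leibniz D hD]
  | succ m ih =>
    let adh : A →+ A := AddMonoidHom.mulLeft h - AddMonoidHom.mulRight h
    have hadh (a b : A) : adh (a * b) = adh a * b + a * adh b := by
      simp only [adh, AddMonoidHom.sub_apply, AddMonoidHom.coe_mulLeft, AddMonoidHom.coe_mulRight]
      noncomm_ring
    have hh : h * divPow K f (m + 1) - divPow K f (m + 1) * h
        = (-2 : K) • (divPow K f m * D f) := by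
      simpa [adh, hhf] using map_divPow_succ adh hadh (K := K) (z := f)
        (by simpa [adh, hhf] using hf.smul_left (-2 : K)) m
    refine nsmul_right_injective_of_charZero (K := K) (m + 1).succ_ne_zero ?_
    calc (m + 2) • (e * divPow K f (m + 2) - divPow K f (m + 2) * e)
        = (e * f - f * e) * divPow K f (m + 1)
          + f * (e * divPow K f (m + 1) - divPow K f (m + 1) * e) := by
          rw [smul_sub, ← mul_smul_comm, ← smul_mul_assoc, ← mul_divPow]
          noncomm_ring
      _ = (h * divPow K f (m + 1) - divPow K f (m + 1) * h) + divPow K f (m + 1) * h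
          + (f * divPow K f m) * h - f * D (divPow K f m) := by
          rw [hef, ih]
          noncomm_ring
      _ = (m + 2) • (divPow K f (m + 1) * h - D (divPow K f (m + 1))) := by
          rw [hh, mul_divPow, smul_mul_assoc, mul_map_divPow D hD hf, map_divPow_succ D hD hf]
          module

end DividedPowers

section DividedMonomials

open Finset

variable (K : Type*) {M ι : Type*} [Field K] [CommRing M] [Algebra K M]

def divMonomial (f : ι → M) (c : ι →₀ ℕ) : M := c.prod fun p m => divPow K (f p) m

variable {K} [CharZero K]

lemma mul_divMonomial (f : ι → M) (c : ι →₀ ℕ) (a : ι) :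
    f a * divMonomial K f c = (c a + 1) • divMonomial K f (c + Finsupp.single a 1) := by
  have hg : ∀ p, divPow K (f p) 0 = 1 := fun p => divPow_zero _
  rw [divMonomial, divMonomial, ← Finsupp.mul_prod_erase' c a _ hg,
    ← Finsupp.mul_prod_erase' (c + Finsupp.single a 1) a _ hg, Finsupp.erase_add,
    Finsupp.erase_single, add_zero, ← mul_assoc, mul_divPow, smul_mul_assoc, Finsupp.add_apply,
    Finsupp.single_eq_same]

lemma sum_smul_divMonomial_eq_mul_sum (f : ι → M) (a : ι) {S T : Finset (ι →₀ ℕ)}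
    (hST : ∀ c, c ∈ T ↔ c + Finsupp.single a 1 ∈ S) :
    ∑ c ∈ S, c a • divMonomial K f c = f a * ∑ c ∈ T, divMonomial K f c := by
  classical
  rw [mul_sum,
    ← sum_filter_of_ne (p := fun c => c a ≠ 0) fun c _ h hc => h (by rw [hc, zero_smul])]
  simp only [mul_divMonomial]
  have hle {c : ι →₀ ℕ} (hc : c a ≠ 0) : Finsupp.single a 1 ≤ c := by
    rwa [Finsupp.single_le_iff, Nat.one_le_iff_ne_zero]
  refine sum_nbij' (· - Finsupp.single a 1) (· + Finsupp.single a 1) ?_ ?_ ?_ ?_ ?_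
  · intro c hc
    rw [mem_filter] at hc
    rw [hST, tsub_add_cancel_of_le (hle hc.2)]
    exact hc.1
  · intro c hc
    simp [(hST c).1 hc]
  · intro c hc
    exact tsub_add_cancel_of_le (hle (mem_filter.1 hc).2)
  · intro c _
    exact add_tsub_cancel_right c _
  · intro c hc
    have hc' := (mem_filter.1 hc).2
    rw [tsub_add_cancel_of_le (hle hc'), Finsupp.tsub_apply, Finsupp.single_eq_same,
      Nat.sub_add_cancel (Nat.one_le_iff_ne_zero.2 hc')]

lemma sum_weight_smul_divMonomial (f : ι → M) (w : ι → ℕ) {s : Finset ι}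
    {S : Finset (ι →₀ ℕ)} (hS : ∀ c ∈ S, c.support ⊆ s) (T : ι → Finset (ι →₀ ℕ))
    (hT : ∀ p ∈ s, ∀ c, c ∈ T p ↔ c + Finsupp.single p 1 ∈ S) :
    ∑ c ∈ S, Finsupp.weight w c • divMonomial K f c
      = ∑ p ∈ s, w p • (f p * ∑ c ∈ T p, divMonomial K f c) := by
  have hrow : ∀ p ∈ s, w p • (f p * ∑ c ∈ T p, divMonomial K f c)
      = ∑ c ∈ S, (c p • w p) • divMonomial K f c := fun p hp => by
    simp only [← sum_smul_divMonomial_eq_mul_sum f p (hT p hp), smul_sum, smul_smul, smul_eq_mul,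
      mul_comm]
  rw [sum_congr rfl hrow, sum_comm]
  refine sum_congr rfl fun c hc => ?_
  rw [← sum_smul, Finsupp.weight_apply,
    Finsupp.sum_of_support_subset c (hS c hc) _ fun p _ => zero_smul ℕ (w p)]

end DividedMonomials

section Multiplicities

open Finset

def boundedMults (n m : ℕ) : Finset (ℕ →₀ ℕ) := (range n).finsupp fun _ => range (m + 1)

lemma mem_boundedMults {n m : ℕ} {c : ℕ →₀ ℕ} :
    c ∈ boundedMults n m ↔ ∀ p, c p ≠ 0 → p < n ∧ c p ≤ m := by
  simp only [boundedMults, mem_finsupp_iff, subset_iff, Finsupp.mem_support_iff, mem_range,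
    Nat.lt_succ_iff]
  refine ⟨fun ⟨hsupp, hle⟩ p hp => ⟨hsupp hp, hle p (hsupp hp)⟩,
    fun h => ⟨fun p hp => (h p hp).1, fun p _ => ?_⟩⟩
  by_cases hp : c p = 0
  · omega
  · exact (h p hp).2

def ofTuple {n m : ℕ} (b : Fin n → Fin (m + 1)) : ℕ →₀ ℕ :=
  Finsupp.embDomain Fin.valEmbedding (Finsupp.equivFunOnFinite.symm fun p => (b p : ℕ))

variable {n m : ℕ}

lemma ofTuple_apply (b : Fin n → Fin (m + 1)) (p : Fin n) : ofTuple b p = b p :=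
  Finsupp.embDomain_apply_self Fin.valEmbedding _ p

lemma ofTuple_apply_of_le (b : Fin n → Fin (m + 1)) {p : ℕ} (hp : n ≤ p) : ofTuple b p = 0 :=
  Finsupp.embDomain_of_notMem_range _ _ _ (by simpa using hp)

lemma ofTuple_injective : Function.Injective (ofTuple : (Fin n → Fin (m + 1)) → ℕ →₀ ℕ) :=
  fun b b' h => funext fun p => Fin.ext <| by rw [← ofTuple_apply, ← ofTuple_apply, h]

lemma ofTuple_mem_boundedMults (b : Fin n → Fin (m + 1)) : ofTuple b ∈ boundedMults n m := by
  refine mem_boundedMults.2 fun p hp => ?_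
  have hpn : p < n := by
    by_contra h
    exact hp (ofTuple_apply_of_le b (not_lt.1 h))
  exact ⟨hpn, by rw [ofTuple_apply b ⟨p, hpn⟩]; exact Nat.lt_succ_iff.1 (b _).isLt⟩

lemma exists_ofTuple_eq {c : ℕ →₀ ℕ} (hc : c ∈ boundedMults n m) :
    ∃ b : Fin n → Fin (m + 1), ofTuple b = c := by
  have hc' := mem_boundedMults.1 hc
  refine ⟨fun p => ⟨c p, Nat.lt_succ_iff.2 ?_⟩, ?_⟩
  · by_cases hp : c p = 0
    · omega
    · exact (hc' p hp).2
  · ext q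
    by_cases hq : q < n
    · exact ofTuple_apply _ ⟨q, hq⟩
    · rw [ofTuple_apply_of_le _ (not_lt.1 hq)]
      by_contra h
      exact hq (hc' q (Ne.symm h)).1

lemma sum_filter_ofTuple {β : Type*} [AddCommMonoid β] (P : (ℕ →₀ ℕ) → Prop) [DecidablePred P]
    (F : (ℕ →₀ ℕ) → β) :
    ∑ b : Fin n → Fin (m + 1) with P (ofTuple b), F (ofTuple b)
      = ∑ c ∈ boundedMults n m with P c, F c := by
  refine sum_nbij ofTuple (fun b hb => ?_) ofTuple_injective.injOn (fun c hc => ?_) fun _ _ => rfl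
  · exact mem_filter.2 ⟨ofTuple_mem_boundedMults b, (mem_filter.1 hb).2⟩
  · obtain ⟨hc, hP⟩ := mem_filter.1 hc
    obtain ⟨b, rfl⟩ := exists_ofTuple_eq hc
    exact ⟨b, by simpa using hP, rfl⟩

lemma weight_ofTuple (w : ℕ → ℕ) (b : Fin n → Fin (m + 1)) :
    Finsupp.weight w (ofTuple b) = ∑ p : Fin n, w p * b p := by
  rw [Finsupp.weight_apply, ofTuple, Finsupp.sum_embDomain, Finsupp.sum_fintype _ _ (by simp)]
  simp [mul_comm]

lemma degree_ofTuple (b : Fin n → Fin (m + 1)) :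
    (ofTuple b).degree = ∑ p : Fin n, (b p : ℕ) := by
  simp [Finsupp.degree_eq_weight_one, weight_ofTuple]

lemma divMonomial_ofTuple {K M : Type*} [Field K] [CommRing M] [Algebra K M] (f : ℕ → M)
    (b : Fin n → Fin (m + 1)) :
    divMonomial K f (ofTuple b) = ∏ p : Fin n, divPow K (f p) (b p) := by
  rw [divMonomial, ofTuple, Finsupp.prod_embDomain, Finsupp.prod_fintype _ _ fun _ => divPow_zero _]
  simp

lemma list_prod_ofFn_divPow {K M A : Type*} [Field K] [CommRing M] [Algebra K M] [Ring A]
    [Algebra K A] (φ : M →ₐ[K] A) (g : ℕ → M) (b : Fin n → Fin (m + 1)) :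
    (List.ofFn fun p : Fin n => divPow K (φ (g p)) (b p)).prod
      = φ (divMonomial K g (ofTuple b)) := by
  rw [divMonomial_ofTuple, ← List.prod_ofFn, map_list_prod, List.map_ofFn]
  simp [Function.comp_def, map_divPow]


def cardWeightMults (r s : ℕ) : Finset (ℕ →₀ ℕ) :=
  {c ∈ boundedMults (s + 1) r | c.degree = r ∧ c.weight id = s}

def partitionMults (k : ℕ) : Finset (ℕ →₀ ℕ) :=
  {c ∈ boundedMults k k | c.weight (· + 1) = k}

lemma mem_cardWeightMults {r s : ℕ} {c : ℕ →₀ ℕ} :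
    c ∈ cardWeightMults r s ↔ c.degree = r ∧ c.weight id = s := by
  refine mem_filter.trans ⟨And.right, fun hc => ⟨mem_boundedMults.2 fun p hp => ⟨?_, ?_⟩, hc⟩⟩
  · have := Finsupp.le_weight_of_ne_zero' id hp
    simp only [id, hc.2] at this
    omega
  · exact hc.1 ▸ Finsupp.le_degree p c

lemma mem_partitionMults {k : ℕ} {c : ℕ →₀ ℕ} :
    c ∈ partitionMults k ↔ c.weight (· + 1) = k := by
  refine mem_filter.trans ⟨And.right, fun hc => ⟨mem_boundedMults.2 fun p hp => ⟨?_, ?_⟩, hc⟩⟩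
  · have := Finsupp.le_weight_of_ne_zero' (· + 1) hp
    omega
  · exact hc ▸ Finsupp.le_weight _ p.succ_ne_zero c

lemma support_subset_of_mem_boundedMults {c : ℕ →₀ ℕ} (hc : c ∈ boundedMults n m) :
    c.support ⊆ range n :=
  fun p hp => mem_range.2 (mem_boundedMults.1 hc p (Finsupp.mem_support_iff.1 hp)).1

variable {K M : Type*} [Field K] [CharZero K] [CommRing M] [Algebra K M]

lemma sum_mul_sum_cardWeightMults (f : ℕ → M) (r s : ℕ) :
    ∑ p ∈ range (s + 1), f p * ∑ c ∈ cardWeightMults r (s - p), divMonomial K f c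
      = (r + 1) • ∑ c ∈ cardWeightMults (r + 1) s, divMonomial K f c := by
  have key := sum_weight_smul_divMonomial (K := K) f (fun _ => 1) (s := range (s + 1))
    (S := cardWeightMults (r + 1) s)
    (fun c hc => support_subset_of_mem_boundedMults (mem_filter.1 hc).1)
    (fun p => cardWeightMults r (s - p)) fun p hp c => by
      rw [mem_cardWeightMults, mem_cardWeightMults, map_add, map_add, Finsupp.degree_single,
        Finsupp.weight_single]
      simp only [id, smul_eq_mul, one_mul]
      have := mem_range.1 hp
      omega
  simp only [one_smul] at key
  rw [← key, smul_sum]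
  refine sum_congr rfl fun c hc => ?_
  rw [← Finsupp.degree_eq_weight_one, (mem_cardWeightMults.1 hc).1]

lemma sum_mul_sum_partitionMults (f : ℕ → M) (k : ℕ) :
    ∑ p ∈ range (k + 1), (p + 1) • (f p * ∑ c ∈ partitionMults (k - p), divMonomial K f c)
      = (k + 1) • ∑ c ∈ partitionMults (k + 1), divMonomial K f c := by
  have key := sum_weight_smul_divMonomial (K := K) f (· + 1) (s := range (k + 1))
    (S := partitionMults (k + 1))
    (fun c hc => support_subset_of_mem_boundedMults (mem_filter.1 hc).1)
    (fun p => partitionMults (k - p)) fun p hp c => by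
      rw [mem_partitionMults, mem_partitionMults, map_add, Finsupp.weight_single, smul_eq_mul,
        one_mul]
      have := mem_range.1 hp
      omega
  rw [← key, smul_sum]
  refine sum_congr rfl fun c hc => ?_
  rw [mem_partitionMults.1 hc]

end Multiplicities

section Current

open Finset

lemma el_zero_right (r : ℕ) : el r (0 : L) = 0 := by
  rw [el, TensorProduct.tmul_zero, map_zero]

lemma el_smul (r : ℕ) (c : ℂ) (z : L) : el r (c • z) = c • el r z := by
  simp only [el, TensorProduct.tmul_smul, map_smul]

lemma el_mul_el_sub (a b : ℕ) (z w : L) :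
    el a z * el b w - el b w * el a z = el (a + b) ⁅z, w⁆ := by
  let _ : LieRing (UC L) := LieRing.ofAssociativeRing
  rw [el, el, el, pow_add, ← LieAlgebra.ExtendScalars.bracket_tmul, LieHom.map_lie, Ring.lie_def]

lemma commute_el (a b : ℕ) (z : L) : Commute (el a z) (el b z) :=
  sub_eq_zero.1 <| by rw [el_mul_el_sub, lie_self, el_zero_right]

def adjoinEl (z : L) : Subalgebra ℂ (UC L) := Algebra.adjoin ℂ (Set.range fun p => el p z)

instance (z : L) : IsMulCommutative (adjoinEl z) :=
  Algebra.isMulCommutative_adjoin ℂ <| by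
    rintro _ ⟨a, rfl⟩ _ ⟨b, rfl⟩
    exact commute_el a b z

def elInAdjoin (z : L) (p : ℕ) : adjoinEl z := ⟨el p z, Algebra.subset_adjoin ⟨p, rfl⟩⟩

lemma yrs_eq_sum_divMonomial (y : L) (r s : ℕ) :
    yrs y r s = (adjoinEl y).val (∑ c ∈ cardWeightMults r s, divMonomial ℂ (elInAdjoin y) c) := by
  rw [map_sum, cardWeightMults, ← sum_filter_ofTuple, yrs]
  refine sum_congr (filter_congr fun b _ => ?_) fun b _ =>
    list_prod_ofFn_divPow (adjoinEl y).val (elInAdjoin y) b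
  simp [degree_ofTuple, weight_ofTuple]

lemma Pk_eq_sum_divMonomial (h : L) (k : ℕ) :
    Pk h k = (adjoinEl h).val (∑ c ∈ partitionMults k,
      divMonomial ℂ (fun p => -((p + 1 : ℕ) : ℂ)⁻¹ • elInAdjoin h (p + 1)) c) := by
  rw [map_sum, partitionMults, ← sum_filter_ofTuple, Pk]
  refine sum_congr (filter_congr fun b _ => ?_) fun b _ =>
    list_prod_ofFn_divPow (adjoinEl h).val (fun p => -((p + 1 : ℕ) : ℂ)⁻¹ • elInAdjoin h (p + 1)) b
  simp [weight_ofTuple]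

lemma sum_el_mul_yrs (y : L) (r s : ℕ) :
    ∑ p ∈ range (s + 1), el p y * yrs y r (s - p) = (r + 1) • yrs y (r + 1) s := by
  rw [yrs_eq_sum_divMonomial, ← map_nsmul, ← sum_mul_sum_cardWeightMults, map_sum]
  refine sum_congr rfl fun p _ => ?_
  rw [map_mul, yrs_eq_sum_divMonomial]
  rfl

lemma sum_el_mul_Pk (h : L) (k : ℕ) :
    ∑ p ∈ range (k + 1), el (p + 1) h * Pk h (k - p) = -((k + 1) • Pk h (k + 1)) := by
  rw [Pk_eq_sum_divMonomial, ← map_nsmul, ← sum_mul_sum_partitionMults, map_sum,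
    ← sum_neg_distrib]
  refine sum_congr rfl fun p _ => ?_
  rw [← smul_mul_assoc, map_mul, Pk_eq_sum_divMonomial, map_nsmul, map_smul,
    ← Nat.cast_smul_eq_nsmul ℂ, smul_smul, mul_neg,
    mul_inv_cancel₀ (Nat.cast_ne_zero.2 p.succ_ne_zero), neg_smul, one_smul,
    neg_mul, neg_neg]
  rfl

end Current

section FormalDeriv

open Finset PowerSeries

variable {R : Type*} [Semiring R]

-- Mathlib's `PowerSeries.derivative` requires commutative coefficients.
def formalDeriv : PowerSeries R →+ PowerSeries R where
  toFun F := mk fun n => (n + 1) • coeff (n + 1) F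
  map_zero' := by ext; simp
  map_add' F G := by ext; simp [smul_add]

lemma coeff_formalDeriv (F : PowerSeries R) (n : ℕ) :
    coeff n (formalDeriv F) = (n + 1) • coeff (n + 1) F := by
  simp [formalDeriv]

lemma formalDeriv_mul (F G : PowerSeries R) :
    formalDeriv (F * G) = formalDeriv F * G + F * formalDeriv G := by
  ext n
  have hsplit : ∀ ij ∈ antidiagonal (n + 1), (n + 1) • (coeff ij.1 F * coeff ij.2 G)
      = (ij.1 • coeff ij.1 F) * coeff ij.2 G + coeff ij.1 F * (ij.2 • coeff ij.2 G) :=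
    fun ij hij => by rw [smul_mul_assoc, mul_smul_comm, ← add_nsmul, mem_antidiagonal.1 hij]
  rw [map_add, coeff_formalDeriv, PowerSeries.coeff_mul, PowerSeries.coeff_mul,
    PowerSeries.coeff_mul, smul_sum, sum_congr rfl hsplit, sum_add_distrib,
    Nat.sum_antidiagonal_succ, Nat.sum_antidiagonal_succ']
  simp [coeff_formalDeriv]

lemma commute_of_forall_coeff {F G : PowerSeries R} (h : ∀ m n, Commute (coeff m F) (coeff n G)) :
    Commute F G := by
  ext n
  rw [PowerSeries.coeff_mul, PowerSeries.coeff_mul, ← Nat.sum_antidiagonal_swap]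
  exact sum_congr rfl fun ij _ => (h ij.2 ij.1).eq

end FormalDeriv

section Series

open Finset PowerSeries

def ySeries (z : L) : PowerSeries (UC L) := mk fun p => el p z

def hSeries (z : L) : PowerSeries (UC L) := mk fun p => el (p + 1) z

def yrsSeries (y : L) (r : ℕ) : PowerSeries (UC L) := mk (yrs y r)

def pSeries (h : L) : PowerSeries (UC L) := mk (Pk h)

lemma yrsSeries_zero (y : L) : yrsSeries y 0 = 1 := by
  ext (_ | s) <;> simp [yrsSeries, yrs, dp, PowerSeries.coeff_one]

lemma ySeries_mul_yrsSeries (y : L) (r : ℕ) :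
    ySeries y * yrsSeries y r = (r + 1) • yrsSeries y (r + 1) := by
  ext s
  rw [PowerSeries.coeff_mul, Nat.sum_antidiagonal_eq_sum_range_succ_mk, map_nsmul]
  simpa [ySeries, yrsSeries] using sum_el_mul_yrs y r s

lemma yrsSeries_eq_divPow (y : L) (r : ℕ) : yrsSeries y r = divPow ℂ (ySeries y) r :=
  eq_divPow_of_mul_eq_nsmul _ (yrsSeries_zero y) (ySeries_mul_yrsSeries y) r

lemma hSeries_mul_pSeries (h : L) : hSeries h * pSeries h = -formalDeriv (pSeries h) := by
  ext k
  rw [PowerSeries.coeff_mul, Nat.sum_antidiagonal_eq_sum_range_succ_mk, map_neg, coeff_formalDeriv]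
  simpa [hSeries, pSeries] using sum_el_mul_Pk h k

variable {x y h : L}

lemma C_mul_ySeries_sub (hxy : ⁅x, y⁆ = h) :
    PowerSeries.C (el 1 x) * ySeries y - ySeries y * PowerSeries.C (el 1 x) = hSeries h := by
  ext n
  rw [map_sub, PowerSeries.coeff_C_mul, PowerSeries.coeff_mul_C]
  simp only [ySeries, hSeries, coeff_mk]
  rw [el_mul_el_sub, hxy, add_comm]

lemma hSeries_mul_ySeries_sub (hhy : ⁅h, y⁆ = (-2 : ℂ) • y) :
    hSeries h * ySeries y - ySeries y * hSeries h = (-2 : ℂ) • formalDeriv (ySeries y) := by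
  ext n
  rw [map_sub, PowerSeries.coeff_mul, PowerSeries.coeff_mul, ← Nat.sum_antidiagonal_swap,
    ← sum_sub_distrib, PowerSeries.coeff_smul, coeff_formalDeriv]
  have hterm : ∀ ij ∈ antidiagonal n, coeff ij.swap.1 (hSeries h) * coeff ij.swap.2 (ySeries y)
      - coeff ij.1 (ySeries y) * coeff ij.2 (hSeries h) = (-2 : ℂ) • el (n + 1) y :=
    fun ij hij => by
      simp only [ySeries, hSeries, coeff_mk, Prod.fst_swap, Prod.snd_swap]
      rw [el_mul_el_sub, hhy, el_smul, add_right_comm, add_comm ij.2, mem_antidiagonal.1 hij]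
  rw [sum_congr rfl hterm, sum_const, Nat.card_antidiagonal]
  simp only [ySeries, coeff_mk]
  rw [smul_comm]

lemma commute_formalDeriv_ySeries (y : L) : Commute (formalDeriv (ySeries y)) (ySeries y) :=
  commute_of_forall_coeff fun m n => by
    simpa [ySeries, coeff_formalDeriv] using (commute_el (m + 1) n y).smul_left (m + 1)

end Series

section LeftIdeal

variable {R A ι : Type*} [CommSemiring R] [Semiring A] [Algebra R A] (g : ι → A)

lemma restrictScalars_span_range_le :
    (Submodule.span A (Set.range g)).restrictScalars R ≤
      Submodule.span R {a | ∃ (u : A) (i : ι), a = u * g i} := by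
  intro v hv
  obtain ⟨c, rfl⟩ := Finsupp.mem_span_range_iff_exists_finsupp.1 hv
  exact Submodule.sum_mem _ fun i _ => Submodule.subset_span ⟨c i, i, rfl⟩

lemma mul_mem_span_range {v b : A} (hv : v ∈ Submodule.span A (Set.range g))
    (hb : ∀ i, g i * b ∈ Submodule.span A (Set.range g)) :
    v * b ∈ Submodule.span A (Set.range g) :=
  (Submodule.map_span_le (LinearMap.toSpanSingleton A A b) _ _).2
    (by rintro _ ⟨i, rfl⟩; exact hb i) ⟨v, hv, rfl⟩

end LeftIdeal

lemma SModEq.smul_of_tower {R M S : Type*} [Ring R] [AddCommGroup M] [Module R M] [SMul S R]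
    [SMul S M] [IsScalarTower S R M] {U : Submodule R M} {x y : M} (hxy : x ≡ y [SMOD U]) (c : S) :
    c • x ≡ c • y [SMOD U] := by
  rw [SModEq.def] at hxy ⊢
  rw [Submodule.Quotient.mk_smul, hxy, Submodule.Quotient.mk_smul]

def currentLeftIdeal (x : L) : Submodule (UC L) (UC L) :=
  Submodule.span (UC L) (Set.range fun p => el p x)

lemma el_mul_mem_currentLeftIdeal {x h : L} (hhx : ⁅h, x⁆ = (2 : ℂ) • x) {w : UC L}
    (hw : w ∈ adjoinEl h) (c : ℕ) : el c x * w ∈ currentLeftIdeal x := by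
  have hgen (p : ℕ) : el p x ∈ currentLeftIdeal x := Submodule.subset_span ⟨p, rfl⟩
  induction hw using Algebra.adjoin_induction generalizing c with
  | mem w hw =>
    obtain ⟨q, rfl⟩ := hw
    have hxh : ⁅x, h⁆ = (-2 : ℂ) • x := by rw [← lie_skew, hhx, neg_smul]
    rw [← sub_add_cancel (el c x * el q h) (el q h * el c x), el_mul_el_sub, hxh, el_smul,
      ← smul_eq_mul]
    exact add_mem (Submodule.smul_of_tower_mem _ _ (hgen _)) (Submodule.smul_mem _ _ (hgen c))
  | algebraMap a =>
    rw [← Algebra.commutes, ← Algebra.smul_def]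
    exact Submodule.smul_of_tower_mem _ _ (hgen c)
  | add a b _ _ ha hb => rw [mul_add]; exact add_mem (ha c) (hb c)
  | mul a b _ _ ha hb => rw [← mul_assoc]; exact mul_mem_span_range _ (ha c) hb

lemma Pk_mem_adjoinEl (h : L) (k : ℕ) : Pk h k ∈ adjoinEl h :=
  Pk_eq_sum_divMonomial h k ▸ SetLike.coe_mem _

section Garland

open Finset PowerSeries

lemma dp_eq_divPow (u : UC L) (p : ℕ) : dp u p = divPow ℂ u p := rfl

variable {x y h : L}

lemma commutator_yrsSeries_mul_pSeries (hxy : ⁅x, y⁆ = h) (hhy : ⁅h, y⁆ = (-2 : ℂ) • y) (r : ℕ) :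
    (PowerSeries.C (el 1 x) * yrsSeries y (r + 1) - yrsSeries y (r + 1) * PowerSeries.C (el 1 x))
        * pSeries h = -formalDeriv (yrsSeries y r * pSeries h) := by
  rw [yrsSeries_eq_divPow, yrsSeries_eq_divPow,
    commutator_divPow_succ formalDeriv formalDeriv_mul (C_mul_ySeries_sub hxy)
      (hSeries_mul_ySeries_sub hhy) (commute_formalDeriv_ySeries y),
    sub_mul, mul_assoc, hSeries_mul_pSeries, formalDeriv_mul]
  noncomm_ring

lemma el_mul_coeff_smodEq (hxy : ⁅x, y⁆ = h) (hhx : ⁅h, x⁆ = (2 : ℂ) • x)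
    (hhy : ⁅h, y⁆ = (-2 : ℂ) • y) (r s : ℕ) :
    el 1 x * coeff s (yrsSeries y (r + 1) * pSeries h)
      ≡ -((s + 1) • coeff (s + 1) (yrsSeries y r * pSeries h)) [SMOD currentLeftIdeal x] := by
  set Cx := PowerSeries.C (el 1 x)
  have hsplit : el 1 x * coeff s (yrsSeries y (r + 1) * pSeries h)
      = coeff s (yrsSeries y (r + 1) * (Cx * pSeries h))
        + coeff s ((Cx * yrsSeries y (r + 1) - yrsSeries y (r + 1) * Cx) * pSeries h) := by
    rw [← map_add, ← PowerSeries.coeff_C_mul]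
    congr 1
    noncomm_ring
  have hmem : coeff s (yrsSeries y (r + 1) * (Cx * pSeries h)) ∈ currentLeftIdeal x := by
    rw [PowerSeries.coeff_mul]
    refine Submodule.sum_mem _ fun ij _ => ?_
    rw [PowerSeries.coeff_C_mul, pSeries, coeff_mk, ← smul_eq_mul]
    exact Submodule.smul_mem _ _ (el_mul_mem_currentLeftIdeal hhx (Pk_mem_adjoinEl h _) 1)
  rw [hsplit, commutator_yrsSeries_mul_pSeries hxy hhy, map_neg, coeff_formalDeriv, SModEq.sub_mem,
    add_sub_cancel_right]
  exact hmem

lemma coeff_zero_yrsSeries_mul_pSeries (y h : L) (r : ℕ) :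
    coeff 0 (yrsSeries y r * pSeries h) = dp (el 0 y) r := by
  rw [PowerSeries.coeff_mul, Finset.Nat.antidiagonal_zero, sum_singleton, yrsSeries_eq_divPow,
    divPow, PowerSeries.coeff_smul, coeff_zero_eq_constantCoeff_apply, map_pow]
  simp [ySeries, pSeries, Pk, dp]

lemma dp_mul_dp_smodEq (hxy : ⁅x, y⁆ = h) (hhx : ⁅h, x⁆ = (2 : ℂ) • x)
    (hhy : ⁅h, y⁆ = (-2 : ℂ) • y) (s r : ℕ) :
    dp (el 1 x) s * dp (el 0 y) (r + s)
      ≡ (-1 : ℂ) ^ s • coeff s (yrsSeries y r * pSeries h) [SMOD currentLeftIdeal x] := by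
  induction s generalizing r with
  | zero =>
    rw [coeff_zero_yrsSeries_mul_pSeries]
    simp [dp]
  | succ s ih =>
    have hs : ((s + 1 : ℕ) : ℂ) ≠ 0 := Nat.cast_ne_zero.2 s.succ_ne_zero
    calc dp (el 1 x) (s + 1) * dp (el 0 y) (r + (s + 1))
        = ((s + 1 : ℕ) : ℂ)⁻¹ • (el 1 x * (dp (el 1 x) s * dp (el 0 y) (r + 1 + s))) := by
          rw [show r + 1 + s = r + (s + 1) by omega, ← mul_assoc, dp_eq_divPow (el 1 x) s,
            mul_divPow, ← Nat.cast_smul_eq_nsmul ℂ, smul_mul_assoc, smul_smul,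
            inv_mul_cancel₀ hs, one_smul]
          rfl
      _ ≡ ((s + 1 : ℕ) : ℂ)⁻¹ •
            (el 1 x * ((-1 : ℂ) ^ s • coeff s (yrsSeries y (r + 1) * pSeries h)))
          [SMOD currentLeftIdeal x] := ((ih (r + 1)).smul (el 1 x)).smul_of_tower _
      _ = (((s + 1 : ℕ) : ℂ)⁻¹ * (-1) ^ s) •
            (el 1 x * coeff s (yrsSeries y (r + 1) * pSeries h)) := by
          rw [mul_smul_comm, smul_smul]
      _ ≡ (((s + 1 : ℕ) : ℂ)⁻¹ * (-1) ^ s) •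
            -((s + 1) • coeff (s + 1) (yrsSeries y r * pSeries h))
          [SMOD currentLeftIdeal x] := (el_mul_coeff_smodEq hxy hhx hhy r s).smul_of_tower _
      _ = (-1 : ℂ) ^ (s + 1) • coeff (s + 1) (yrsSeries y r * pSeries h) := by
          rw [← Nat.cast_smul_eq_nsmul ℂ, smul_neg, smul_smul, ← neg_smul]
          congr 1
          field_simp
          ring

end Garland

theorem garland_general (x y h : L) (hxy : ⁅x, y⁆ = h) (hhx : ⁅h, x⁆ = (2 : ℂ) • x)
    (hhy : ⁅h, y⁆ = (-2 : ℂ) • y) (s : ℕ) (r : ℕ) :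
    dp (el 1 x) s * dp (el 0 y) (r + s)
        - (-1) ^ s * ∑ k ∈ Finset.range (s + 1), yrs y r (s - k) * Pk h k
      ∈ Submodule.span ℂ {a : UC L | ∃ (u : UC L) (p : ℕ), a = u * el p x} := by
  have hsum : (-1) ^ s * ∑ k ∈ Finset.range (s + 1), yrs y r (s - k) * Pk h k
      = (-1 : ℂ) ^ s • PowerSeries.coeff s (yrsSeries y r * pSeries h) := by
    rw [PowerSeries.coeff_mul, ← Finset.Nat.sum_antidiagonal_swap,
      Finset.Nat.sum_antidiagonal_eq_sum_range_succ_mk, Algebra.smul_def]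
    simp [yrsSeries, pSeries]
  rw [hsum]
  exact restrictScalars_span_range_le (R := ℂ) _
    (SModEq.sub_mem.1 (dp_mul_dp_smodEq hxy hhx hhy s r))

/-- **Garland's identity.** For an sl₂-triple `(x, y, h)` in a complex Lie algebra `L`,
in `U(L[t])` the element
`(x⊗t)^{(s)} (y⊗1)^{(r+s)} − (−1)^s ∑_{k} y(r, s−k) P(u)_k`
lies in the left ideal `U(L[t]) · n⁺[t]`, where `n⁺[t]` is spanned by the
elements `x ⊗ t^p`. -/
theorem garland (x y h : L) (hxy : ⁅x, y⁆ = h) (hhx : ⁅h, x⁆ = (2 : ℂ) • x)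
    (hhy : ⁅h, y⁆ = (-2 : ℂ) • y) (s : ℕ) (hs : 1 ≤ s) (r : ℕ) :
    dp (el 1 x) s * dp (el 0 y) (r + s)
        - (-1) ^ s * ∑ k ∈ Finset.range (s + 1), yrs y r (s - k) * Pk h k
      ∈ Submodule.span ℂ {a : UC L | ∃ (u : UC L) (p : ℕ), a = u * el p x} :=
  garland_general x y h hxy hhx hhy s r

end
end

section
/- In sl_3[t], let w be a highest weight vector of an sl_2[t]-type current module with (y ⊗ 1)^{N+1} w = 0 where N = 2|λ|-2j-2, i.e. (y_θ ⊗ 1)^{2|λ|-2j-1} w_{λ,j} = 0 in the truncated Weyl module W_{|λ|-j}(λ). Then applying (x_θ ⊗ t)^{2|λ|-2j-3} to this relation yields (y_θ ⊗ t^{|λ|-j-2})(y_θ ⊗ t^{|λ|-j-1}) w_{λ,j} = 0. -/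
open scoped TensorProduct
open LieAlgebra.SpecialLinear Polynomial

/-- The special linear Lie algebra `sl_N(ℂ)`. -/
abbrev slC (N : ℕ) : Type := LieAlgebra.SpecialLinear.sl (Fin N) ℂ

/-- The current algebra `sl_{n+1}[t] = sl_{n+1}(ℂ) ⊗ ℂ[t]`. -/
abbrev CA (n : ℕ) : Type := (Polynomial ℂ) ⊗[ℂ] slC (n+1)

noncomputable instance (n : ℕ) : LieAlgebra ℂ (CA n) where
  lie_smul c x y := by
    rw [← algebraMap_smul (Polynomial ℂ) c y, ← algebraMap_smul (Polynomial ℂ) c ⁅x, y⁆]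
    exact @lie_smul (Polynomial ℂ) (CA n) (CA n) _ _ _ _ _ _ _
      ((algebraMap ℂ (Polynomial ℂ)) c) x y

/-- The element `g ⊗ t^r` of the current algebra. -/
noncomputable def tp (n r : ℕ) (g : slC (n+1)) : CA n :=
  (Polynomial.X ^ r : Polynomial ℂ) ⊗ₜ[ℂ] g

/-- The coroot element `h_{α_i} = E_{i,i} - E_{i+1,i+1}` of `sl_{n+1}(ℂ)`. -/
noncomputable def Hc {n : ℕ} (i : Fin n) : slC (n+1) :=
  ⟨Matrix.single i.castSucc i.castSucc 1 - Matrix.single i.succ i.succ 1, by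
    show _ ∈ LinearMap.ker (Matrix.traceLinearMap (Fin (n+1)) ℂ ℂ)
    rw [LinearMap.mem_ker]; simp⟩

/-- The root vector `E_{i,j}` (`i ≠ j`) of `sl_{n+1}(ℂ)`. -/
noncomputable def EE {n : ℕ} (i j : Fin (n+1)) (h : j ≠ i) : slC (n+1) :=
  LieAlgebra.SpecialLinear.single i j h.symm (1 : ℂ)

/-- The defining relations of the local Weyl module `W_loc(μ)`, `μ = ∑ᵢ m i · ωᵢ`,
for a vector `w` of a module over the current algebra:
`(n⁺ ⊗ ℂ[t]) w = 0`, `(h_{α_i} ⊗ t^s) w = δ_{s,0} μ(h_{α_i}) w`, and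
`(y_{α_i} ⊗ 1)^{μ(h_{α_i})+1} w = 0`. -/
structure WeylRel (n : ℕ) (m : Fin n → ℕ) {V : Type} [AddCommGroup V] [Module ℂ V]
    [LieRingModule (CA n) V] (w : V) : Prop where
  posAnn : ∀ (i j : Fin (n+1)) (hij : i < j) (r : ℕ), ⁅tp n r (EE i j hij.ne'), w⁆ = 0
  cartan : ∀ (i : Fin n) (s : ℕ), ⁅tp n s (Hc i), w⁆ = (if s = 0 then (m i : ℂ) else 0) • w
  lowering : ∀ i : Fin n,
    (fun v => ⁅tp n 0 (EE i.succ i.castSucc (Fin.castSucc_lt_succ (i := i)).ne), v⁆)^[m i + 1] w = 0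

/-- `V` together with the cyclic vector `w` *is the* local Weyl module `W_loc(∑ᵢ m i ωᵢ)` for
`sl_{n+1}[t]`: `w` satisfies the defining relations, generates `V`, and `(V, w)` is universal
among modules with a vector satisfying these relations. -/
structure IsLocalWeyl (n : ℕ) (m : Fin n → ℕ) (V : Type) [AddCommGroup V] [Module ℂ V]
    [LieRingModule (CA n) V] [LieModule ℂ (CA n) V] (w : V) : Prop where
  rel : WeylRel n m w
  cyclic : ∀ N : LieSubmodule ℂ (CA n) V, w ∈ N → N = ⊤
  universal : ∀ (V' : Type) [AddCommGroup V'] [Module ℂ V'] [LieRingModule (CA n) V']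
    [LieModule ℂ (CA n) V'] (w' : V'), WeylRel n m w' → ∃ f : V →ₗ⁅ℂ, CA n⁆ V', f w = w'
/-- The lowering root vector `y_θ = E_{3,1}` for the highest root `θ` of `sl_3(ℂ)`. -/
noncomputable def Yθ : slC 3 := EE (n := 2) (Fin.last 2) 0 (by decide)

/-- The defining relations of the truncated Weyl module `W_N(λ)` for `sl_3[t]`,
`λ = l 0 · ω₁ + l 1 · ω₂`: the local Weyl relations plus `(y_θ ⊗ t^N) w = 0`. -/
structure TruncRel (N : ℕ) (l : Fin 2 → ℕ) {V : Type} [AddCommGroup V] [Module ℂ V]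
    [LieRingModule (CA 2) V] (w : V) : Prop where
  weyl : WeylRel 2 l w
  trunc : ⁅tp 2 N Yθ, w⁆ = 0

/-- `(V, w)` *is the* truncated Weyl module `W_N(λ)` for `sl_3[t]`. -/
structure IsTruncWeyl (N : ℕ) (l : Fin 2 → ℕ) (V : Type) [AddCommGroup V] [Module ℂ V]
    [LieRingModule (CA 2) V] [LieModule ℂ (CA 2) V] (w : V) : Prop where
  rel : TruncRel N l w
  cyclic : ∀ S : LieSubmodule ℂ (CA 2) V, w ∈ S → S = ⊤
  universal : ∀ (V' : Type) [AddCommGroup V'] [Module ℂ V'] [LieRingModule (CA 2) V']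
    [LieModule ℂ (CA 2) V'] (w' : V'), TruncRel N l w' → ∃ f : V →ₗ⁅ℂ, CA 2⁆ V', f w = w'

/-- A `ℤ₊`-grading of a module over the current algebra: the pieces are independent,
exhaust the module, and `(g ⊗ t^r)` maps the `k`-th piece to the `(k+r)`-th piece. -/
def IsGrading (n : ℕ) (V : Type) [AddCommGroup V] [Module ℂ V] [LieRingModule (CA n) V]
    (gr : ℕ → Submodule ℂ V) : Prop :=
  iSupIndep gr ∧ (⨆ k, gr k) = ⊤ ∧
    ∀ (r k : ℕ) (g : slC (n+1)), ∀ v ∈ gr k, ⁅tp n r g, v⁆ ∈ gr (k + r)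

/-- The weight space of weight `μ` (for the standard Cartan subalgebra). -/
noncomputable def wtSp (n : ℕ) (V : Type) [AddCommGroup V] [Module ℂ V]
    [LieRingModule (CA n) V] [LieModule ℂ (CA n) V] (μ : Fin n → ℤ) : Submodule ℂ V :=
  ⨅ i : Fin n, Module.End.eigenspace (LieModule.toEnd ℂ (CA n) V (tp n 0 (Hc i))) ((μ i : ℂ))

/-- The coefficient of `q^r e(μ)` in the graded character of a graded module:
the dimension of the weight-`μ` subspace of the `r`-th graded piece. -/
noncomputable def chc {n : ℕ} {V : Type} [AddCommGroup V] [Module ℂ V]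
    [LieRingModule (CA n) V] [LieModule ℂ (CA n) V]
    (gr : ℕ → Submodule ℂ V) (μ : Fin n → ℤ) (r : ℕ) : ℕ :=
  Module.finrank ℂ ↥(gr r ⊓ wtSp n V μ)

/-- Multiplication of a `q`-series by a polynomial in `q`, at the level of coefficients. -/
def convC (c : Polynomial ℤ) (f : ℕ → ℤ) (r : ℕ) : ℤ :=
  ∑ a ∈ Finset.range (r + 1), c.coeff a * f (r - a)


/-!
Put `Y(u) = ∑ₚ (y_θ ⊗ tᵖ) uᵖ` and let `E(k, m)` be the coefficient of `uᵐ` in `Y(u)ᵏ w`, so that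
`E(k, 0) = (y_θ ⊗ 1)ᵏ w`. Only the `sl₂[t]`-brackets of `x_θ, h_θ, y_θ` are used:
`[x_θ ⊗ t, Y(u)] = ∑ₚ (h_θ ⊗ tᵖ⁺¹) uᵖ` kills `w`, and its bracket with `Y(u)` is `-2 Y'(u)`,
which gives `(x_θ ⊗ t) E(k + 1, m) = -(k + 1)(m + 1) E(k, m + 1)`. With `N = |λ| - j`,
applying `x_θ ⊗ t` to `E(2N - 1, 0) = 0` a total of `2N - 3` times gives `E(2, 2N - 3) = 0`.
As `(y_θ ⊗ tᵖ) w = 0` for `p ≥ N`, only `p ∈ {N - 2, N - 1}` survive in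
`E(2, 2N - 3) = ∑_{p+q = 2N-3} (y_θ ⊗ tᵖ)(y_θ ⊗ t^q) w`, and both give the claimed vector.
-/

open Finset

namespace Finset.Nat

variable {M : Type*} [AddCommMonoid M]

theorem sum_antidiagonal_antidiagonal_assoc (f : ℕ → ℕ → ℕ → M) (n : ℕ) :
    ∑ x ∈ antidiagonal n, ∑ z ∈ antidiagonal x.2, f x.1 z.1 z.2 =
      ∑ x ∈ antidiagonal n, ∑ z ∈ antidiagonal x.1, f z.1 z.2 x.2 := by
  simp only [Finset.sum_sigma']
  apply Finset.sum_nbij' (fun x ↦ ⟨(x.1.1 + x.2.1, x.2.2), (x.1.1, x.2.1)⟩)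
    (fun x ↦ ⟨(x.2.1, x.2.2 + x.1.2), (x.2.2, x.1.2)⟩) <;>
    aesop (add simp [add_assoc])

theorem sum_antidiagonal_antidiagonal_swap (f : ℕ → ℕ → ℕ → M) (n : ℕ) :
    ∑ x ∈ antidiagonal n, ∑ z ∈ antidiagonal x.2, f x.1 z.1 z.2 =
      ∑ x ∈ antidiagonal n, ∑ z ∈ antidiagonal x.2, f z.1 x.1 z.2 := by
  rw [sum_antidiagonal_antidiagonal_assoc f,
    sum_antidiagonal_antidiagonal_assoc fun a b c ↦ f b a c]
  exact Finset.sum_congr rfl fun x _ ↦ (sum_antidiagonal_swap (f := fun z ↦ f z.1 z.2 x.2)).symm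

theorem succ_smul_sum_antidiagonal_succ (f : ℕ → ℕ → M) (n : ℕ) :
    (n + 1) • ∑ x ∈ antidiagonal (n + 1), f x.1 x.2 =
      ∑ x ∈ antidiagonal n, ((x.1 + 1) • f (x.1 + 1) x.2 + (x.2 + 1) • f x.1 (x.2 + 1)) := by
  rw [Finset.smul_sum, sum_antidiagonal_subst (f := fun x k ↦ k • f x.1 x.2),
    Finset.sum_congr rfl fun x _ ↦ add_smul x.1 x.2 (f x.1 x.2), Finset.sum_add_distrib,
    sum_antidiagonal_succ, sum_antidiagonal_succ' (f := fun x ↦ x.2 • f x.1 x.2),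
    zero_smul, zero_smul, zero_add, zero_add, Finset.sum_add_distrib]

end Finset.Nat

open Finset.Nat

theorem lie_lie_comm_of_lie_eq_zero {L V : Type*} [LieRing L] [AddCommGroup V]
    [LieRingModule L V] {a b : L} (hab : ⁅a, b⁆ = 0) (v : V) : ⁅a, ⁅b, v⁆⁆ = ⁅b, ⁅a, v⁆⁆ := by
  rw [leibniz_lie, hab, zero_lie, zero_add]

structure IsCurrentSl2Triple {L : Type*} [LieRing L] (x h y : ℕ → L) : Prop where
  lie_x_y : ∀ a b, ⁅x a, y b⁆ = h (a + b)
  lie_h_y : ∀ a b, ⁅h a, y b⁆ = -(2 • y (a + b))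
  lie_y_y : ∀ a b, ⁅y a, y b⁆ = 0

section CurrentSl2

variable {L V : Type*} [LieRing L] [AddCommGroup V] [LieRingModule L V]

/-- The coefficient of `uᵐ` in `Y(u)ᵏ w`, where `Y(u) = ∑ₚ y p • uᵖ`: the sum of
`y p₁ (y p₂ (⋯ (y pₖ w)))` over all `p₁ + ⋯ + pₖ = m`. -/
def compositionSum (y : ℕ → L) (w : V) : ℕ → ℕ → V
  | 0, m => if m = 0 then w else 0
  | k + 1, m => ∑ x ∈ antidiagonal m, ⁅y x.1, compositionSum y w k x.2⁆

variable {x h y : ℕ → L} {w : V}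

theorem compositionSum_zero (m : ℕ) :
    compositionSum y w 0 m = if m = 0 then w else 0 := rfl

theorem compositionSum_succ (k m : ℕ) :
    compositionSum y w (k + 1) m = ∑ x ∈ antidiagonal m, ⁅y x.1, compositionSum y w k x.2⁆ :=
  rfl

theorem compositionSum_zero_right (k : ℕ) :
    compositionSum y w k 0 = (fun v ↦ ⁅y 0, v⁆)^[k] w := by
  induction k with
  | zero => rfl
  | succ k ih => simp [compositionSum_succ, ih, Function.iterate_succ_apply']

theorem compositionSum_one (m : ℕ) : compositionSum y w 1 m = ⁅y m, w⁆ := by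
  rw [compositionSum_succ, Finset.Nat.sum_antidiagonal_eq_sum_range_succ_mk,
    Finset.sum_eq_single_of_mem m (Finset.self_mem_range_succ m)]
  · simp [compositionSum_zero]
  · intro p hp hpm
    rw [compositionSum_zero, if_neg (by simp at hp; omega), lie_zero]

theorem compositionSum_two (m : ℕ) :
    compositionSum y w 2 m = ∑ x ∈ antidiagonal m, ⁅y x.1, ⁅y x.2, w⁆⁆ := by
  simp only [compositionSum_succ 1, compositionSum_one]

theorem sum_lie_h_succ_compositionSum (hhy : ∀ a b, ⁅h a, y b⁆ = -(2 • y (a + b)))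
    (hw : ∀ a, ⁅h (a + 1), w⁆ = 0) (k m : ℕ) :
    ∑ x ∈ antidiagonal m, ⁅h (x.1 + 1), compositionSum y w k x.2⁆ =
      -((2 * (m + 1)) • compositionSum y w k (m + 1)) := by
  induction k generalizing m with
  | zero =>
    simp only [compositionSum_zero, add_eq_zero, one_ne_zero, and_false, if_false, smul_zero,
      neg_zero]
    refine Finset.sum_eq_zero fun x _ ↦ ?_
    split_ifs <;> simp [hw]
  | succ k ih =>
    set F : ℕ → ℕ → V := fun a b ↦ ⁅y a, compositionSum y w k b⁆
    have hsplit : ∀ a b c, ⁅h (a + 1), ⁅y b, compositionSum y w k c⁆⁆ =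
        -(2 • F (a + b + 1) c) + ⁅y b, ⁅h (a + 1), compositionSum y w k c⁆⁆ := fun a b c ↦ by
      rw [leibniz_lie, hhy, neg_lie, nsmul_lie, add_right_comm]
    have hraise : ∑ x ∈ antidiagonal m, ∑ z ∈ antidiagonal x.2, -(2 • F (x.1 + z.1 + 1) z.2) =
        ∑ x ∈ antidiagonal m, -(2 • (x.1 + 1) • F (x.1 + 1) x.2) := by
      rw [sum_antidiagonal_antidiagonal_assoc (fun a b c ↦ -(2 • F (a + b + 1) c))]
      refine Finset.sum_congr rfl fun x _ ↦ ?_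
      rw [← sum_antidiagonal_subst (f := fun _ n ↦ -(2 • F (n + 1) x.2)),
        Finset.sum_const, Nat.card_antidiagonal, smul_neg, smul_comm]
    have hcommute : ∑ x ∈ antidiagonal m, ∑ z ∈ antidiagonal x.2,
        ⁅y z.1, ⁅h (x.1 + 1), compositionSum y w k z.2⁆⁆ =
          ∑ x ∈ antidiagonal m, -(2 • (x.2 + 1) • F x.1 (x.2 + 1)) := by
      rw [sum_antidiagonal_antidiagonal_swap
        (fun a b c ↦ ⁅y b, ⁅h (a + 1), compositionSum y w k c⁆⁆)]
      refine Finset.sum_congr rfl fun x _ ↦ ?_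
      rw [← lie_sum, ih, lie_neg, lie_nsmul, mul_smul]
    calc ∑ x ∈ antidiagonal m, ⁅h (x.1 + 1), compositionSum y w (k + 1) x.2⁆
        = ∑ x ∈ antidiagonal m, ∑ z ∈ antidiagonal x.2, (-(2 • F (x.1 + z.1 + 1) z.2) +
            ⁅y z.1, ⁅h (x.1 + 1), compositionSum y w k z.2⁆⁆) := by
          simp only [compositionSum_succ, lie_sum, hsplit]
      _ = -(2 • ∑ x ∈ antidiagonal m,
            ((x.1 + 1) • F (x.1 + 1) x.2 + (x.2 + 1) • F x.1 (x.2 + 1))) := by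
          rw [Finset.sum_congr rfl fun x _ ↦ Finset.sum_add_distrib, Finset.sum_add_distrib,
            hraise, hcommute, ← Finset.sum_add_distrib, Finset.smul_sum,
            ← Finset.sum_neg_distrib]
          simp only [smul_add, neg_add]
      _ = -((2 * (m + 1)) • compositionSum y w (k + 1) (m + 1)) := by
          rw [← succ_smul_sum_antidiagonal_succ, mul_smul]; rfl

/-- Since the `y p` commute, each of the `k + 1` parts of a composition carries on average the
same weight. -/
theorem sum_snd_smul_lie_compositionSum (hyy : ∀ a b, ⁅y a, y b⁆ = 0) (k n : ℕ) :
    ∑ x ∈ antidiagonal n, x.2 • ⁅y x.1, compositionSum y w k x.2⁆ =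
      k • ∑ x ∈ antidiagonal n, x.1 • ⁅y x.1, compositionSum y w k x.2⁆ := by
  induction k generalizing n with
  | zero =>
    rw [zero_smul]
    refine Finset.sum_eq_zero fun x _ ↦ ?_
    rw [compositionSum_zero]
    split_ifs with hx <;> simp [hx]
  | succ k ih =>
    set G : ℕ → ℕ → ℕ → V := fun a b c ↦ ⁅y a, ⁅y b, compositionSum y w k c⁆⁆
    have hfirst : ∑ x ∈ antidiagonal n, ∑ z ∈ antidiagonal x.2, z.1 • G x.1 z.1 z.2 =
        ∑ x ∈ antidiagonal n, x.1 • ⁅y x.1, compositionSum y w (k + 1) x.2⁆ := by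
      rw [sum_antidiagonal_antidiagonal_swap (fun a b c ↦ b • G a b c)]
      refine Finset.sum_congr rfl fun x _ ↦ ?_
      simp only [G, compositionSum_succ, lie_sum, Finset.smul_sum]
      exact Finset.sum_congr rfl fun z _ ↦ by rw [lie_lie_comm_of_lie_eq_zero (hyy _ _)]
    have hsecond : ∑ x ∈ antidiagonal n, ∑ z ∈ antidiagonal x.2, z.2 • G x.1 z.1 z.2 =
        k • ∑ x ∈ antidiagonal n, ∑ z ∈ antidiagonal x.2, z.1 • G x.1 z.1 z.2 := by
      rw [Finset.smul_sum]
      refine Finset.sum_congr rfl fun x _ ↦ ?_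
      calc ∑ z ∈ antidiagonal x.2, z.2 • G x.1 z.1 z.2
          = ⁅y x.1, ∑ z ∈ antidiagonal x.2, z.2 • ⁅y z.1, compositionSum y w k z.2⁆⁆ := by
            simp only [G, lie_sum, lie_nsmul]
        _ = k • ∑ z ∈ antidiagonal x.2, z.1 • G x.1 z.1 z.2 := by
            simp only [ih, G, lie_nsmul, lie_sum, Finset.smul_sum]
    calc ∑ x ∈ antidiagonal n, x.2 • ⁅y x.1, compositionSum y w (k + 1) x.2⁆
        = ∑ x ∈ antidiagonal n, ∑ z ∈ antidiagonal x.2, (z.1 + z.2) • G x.1 z.1 z.2 := by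
          refine Finset.sum_congr rfl fun x _ ↦ ?_
          rw [compositionSum_succ, lie_sum, Finset.smul_sum,
            sum_antidiagonal_subst (f := fun z n ↦ n • G x.1 z.1 z.2)]
      _ = (k + 1) • ∑ x ∈ antidiagonal n, x.1 • ⁅y x.1, compositionSum y w (k + 1) x.2⁆ := by
          simp only [add_smul, Finset.sum_add_distrib, hsecond, hfirst, one_smul, add_comm]

theorem succ_smul_sum_snd_smul_lie_compositionSum (hyy : ∀ a b, ⁅y a, y b⁆ = 0) (k n : ℕ) :
    (k + 1) • ∑ x ∈ antidiagonal n, x.2 • ⁅y x.1, compositionSum y w k x.2⁆ =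
      (k * n) • compositionSum y w (k + 1) n := by
  have htotal : ∑ x ∈ antidiagonal n, x.1 • ⁅y x.1, compositionSum y w k x.2⁆ +
      ∑ x ∈ antidiagonal n, x.2 • ⁅y x.1, compositionSum y w k x.2⁆ =
        n • compositionSum y w (k + 1) n := by
    rw [← Finset.sum_add_distrib, compositionSum_succ, Finset.smul_sum,
      sum_antidiagonal_subst (f := fun x n ↦ n • ⁅y x.1, compositionSum y w k x.2⁆)]
    simp only [add_smul]
  rw [succ_nsmul, mul_smul, ← htotal, smul_add, sum_snd_smul_lie_compositionSum hyy, add_comm]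

theorem lie_x_one_compositionSum (hT : IsCurrentSl2Triple x h y)
    (hwh : ∀ a, ⁅h (a + 1), w⁆ = 0) (hwx : ⁅x 1, w⁆ = 0) (k m : ℕ) :
    ⁅x 1, compositionSum y w (k + 1) m⁆ =
      -(((k + 1) * (m + 1)) • compositionSum y w k (m + 1)) := by
  induction k generalizing m with
  | zero =>
    rw [compositionSum_one, leibniz_lie, hT.lie_x_y, hwx, lie_zero, add_zero, add_comm, hwh,
      compositionSum_zero, if_neg m.succ_ne_zero, smul_zero, neg_zero]
  | succ k ih =>
    calc ⁅x 1, compositionSum y w (k + 1 + 1) m⁆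
        = ∑ p ∈ antidiagonal m, (⁅h (p.1 + 1), compositionSum y w (k + 1) p.2⁆ +
            ⁅y p.1, ⁅x 1, compositionSum y w (k + 1) p.2⁆⁆) := by
          rw [compositionSum_succ, lie_sum]
          exact Finset.sum_congr rfl fun p _ ↦ by rw [leibniz_lie, hT.lie_x_y, add_comm 1]
      _ = -((2 * (m + 1)) • compositionSum y w (k + 1) (m + 1)) +
            -((k + 1) • ∑ p ∈ antidiagonal (m + 1), p.2 • ⁅y p.1, compositionSum y w k p.2⁆) := by
          rw [Finset.sum_add_distrib, sum_lie_h_succ_compositionSum hT.lie_h_y hwh,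
            sum_antidiagonal_succ', zero_smul, zero_add, Finset.smul_sum, ← Finset.sum_neg_distrib]
          simp only [ih, lie_neg, lie_nsmul, mul_smul]
      _ = -(((k + 1 + 1) * (m + 1)) • compositionSum y w (k + 1) (m + 1)) := by
          rw [succ_smul_sum_snd_smul_lie_compositionSum hT.lie_y_y, ← neg_add, ← add_smul]
          congr 2
          ring

variable [IsAddTorsionFree V]

theorem compositionSum_eq_zero_of_add_eq_zero (hT : IsCurrentSl2Triple x h y)
    (hwh : ∀ a, ⁅h (a + 1), w⁆ = 0) (hwx : ⁅x 1, w⁆ = 0) {k i m : ℕ}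
    (hz : compositionSum y w (k + i) m = 0) : compositionSum y w k (m + i) = 0 := by
  induction i generalizing m with
  | zero => exact hz
  | succ i ih =>
    have hx := lie_x_one_compositionSum hT hwh hwx (k + i) m
    rw [← add_assoc] at hz
    rw [hz, lie_zero, eq_comm, neg_eq_zero, smul_eq_zero] at hx
    rw [← add_assoc, add_right_comm]
    exact ih (hx.resolve_left (by positivity))

theorem lie_y_eq_zero_of_le (hhy : ∀ a b, ⁅h a, y b⁆ = -(2 • y (a + b)))
    (hwh : ⁅h 1, w⁆ = 0) {N : ℕ} (hN : ⁅y N, w⁆ = 0) {p : ℕ} (hp : N ≤ p) : ⁅y p, w⁆ = 0 := by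
  induction p, hp using Nat.le_induction with
  | base => exact hN
  | succ p _ ih =>
    have hh := leibniz_lie (h 1) (y p) w
    rw [ih, lie_zero, hhy, hwh, lie_zero, add_zero, neg_lie, nsmul_lie, eq_comm, neg_eq_zero,
      smul_eq_zero, add_comm] at hh
    exact hh.resolve_left two_ne_zero

theorem lie_y_lie_y_succ_eq_zero (hT : IsCurrentSl2Triple x h y)
    (hwh : ∀ a, ⁅h (a + 1), w⁆ = 0) (hwx : ⁅x 1, w⁆ = 0) {N : ℕ} (hN : ⁅y (N + 2), w⁆ = 0)
    (hnil : (fun v ↦ ⁅y 0, v⁆)^[2 * N + 3] w = 0) : ⁅y N, ⁅y (N + 1), w⁆⁆ = 0 := by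
  have hvanish : ∀ p, N + 2 ≤ p → ⁅y p, w⁆ = 0 := fun p ↦ lie_y_eq_zero_of_le hT.lie_h_y (hwh 0) hN
  have hcomm := fun a b ↦ lie_lie_comm_of_lie_eq_zero (hT.lie_y_y a b) w
  have hzero : compositionSum y w 2 (2 * N + 1) = 0 := by
    rw [← zero_add (2 * N + 1)]
    refine compositionSum_eq_zero_of_add_eq_zero hT hwh hwx ?_
    rwa [compositionSum_zero_right, show 2 + (2 * N + 1) = 2 * N + 3 by ring]
  rw [compositionSum_two, Finset.sum_eq_add_of_mem (N, N + 1) (N + 1, N) (by simp; ring)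
    (by simp; ring) (by simp), hcomm (N + 1), ← two_nsmul, smul_eq_zero] at hzero
  · exact hzero.resolve_left two_ne_zero
  · rintro ⟨p, q⟩ hpq ⟨hne, hne'⟩
    simp only [HasAntidiagonal.mem_antidiagonal, ne_eq, Prod.mk.injEq] at hpq hne hne'
    by_cases hq : N + 2 ≤ q
    · rw [hvanish q hq, lie_zero]
    · rw [hcomm, hvanish p (by omega), lie_zero]

end CurrentSl2

noncomputable def Xθ : slC 3 := EE 0 (Fin.last 2) (by decide)

noncomputable def Hθ : slC 3 := Hc 0 + Hc 1

theorem tp_lie_tp (n a b : ℕ) (g g' : slC (n + 1)) :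
    ⁅tp n a g, tp n b g'⁆ = tp n (a + b) ⁅g, g'⁆ := by
  rw [tp, tp, tp, LieAlgebra.ExtendScalars.bracket_tmul, pow_add]

theorem tp_add (n a : ℕ) (g g' : slC (n + 1)) : tp n a (g + g') = tp n a g + tp n a g' :=
  TensorProduct.tmul_add _ _ _

theorem tp_neg_nsmul (n a k : ℕ) (g : slC (n + 1)) : tp n a (-(k • g)) = -(k • tp n a g) := by
  rw [tp, tp, TensorProduct.tmul_neg, TensorProduct.tmul_smul]

theorem lie_Xθ_Yθ : ⁅Xθ, Yθ⁆ = Hθ := by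
  ext i k
  fin_cases i <;> fin_cases k <;>
    simp [Xθ, Yθ, Hθ, Hc, EE, Ring.lie_def, Matrix.mul_apply, Matrix.single]

theorem lie_Hθ_Yθ : ⁅Hθ, Yθ⁆ = -(2 • Yθ) := by
  ext i k
  fin_cases i <;> fin_cases k <;>
    simp [Yθ, Hθ, Hc, EE, Ring.lie_def, Matrix.mul_apply, Matrix.single, ← neg_add',
      one_add_one_eq_two]

theorem isCurrentSl2Triple_theta :
    IsCurrentSl2Triple (fun a ↦ tp 2 a Xθ) (fun a ↦ tp 2 a Hθ) (fun a ↦ tp 2 a Yθ) where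
  lie_x_y a b := by rw [tp_lie_tp, lie_Xθ_Yθ]
  lie_h_y a b := by rw [tp_lie_tp, lie_Hθ_Yθ, tp_neg_nsmul]
  lie_y_y a b := by rw [tp_lie_tp, lie_self, tp, TensorProduct.tmul_zero]

namespace WeylRel

variable {V : Type} [AddCommGroup V] [Module ℂ V] [LieRingModule (CA 2) V] {l : Fin 2 → ℕ} {w : V}

theorem lie_Xθ (hw : WeylRel 2 l w) (a : ℕ) : ⁅tp 2 a Xθ, w⁆ = 0 :=
  hw.posAnn 0 (Fin.last 2) (by decide) a

theorem lie_Hθ_succ (hw : WeylRel 2 l w) (a : ℕ) : ⁅tp 2 (a + 1) Hθ, w⁆ = 0 := by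
  simp only [Hθ, tp_add, add_lie, hw.cartan, a.succ_ne_zero, if_false, zero_smul, add_zero]

end WeylRel

/-- In the truncated Weyl module `W_{|λ|-j}(λ)` for `sl_3[t]`, with `0 ≤ j < min(l₁,l₂)`,
the relation `(y_θ ⊗ 1)^{2|λ|-2j-1} w = 0` (which holds there) yields
`(y_θ ⊗ t^{|λ|-j-2})(y_θ ⊗ t^{|λ|-j-1}) w = 0`. -/
theorem stmt16 (l1 l2 j : ℕ) (hj : j < min l1 l2)
    (V : Type) [AddCommGroup V] [Module ℂ V] [LieRingModule (CA 2) V]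
    [LieModule ℂ (CA 2) V] (w : V)
    (h : IsTruncWeyl (l1 + l2 - j) ![l1, l2] V w)
    (hnil : (fun v => ⁅tp 2 0 Yθ, v⁆)^[2 * (l1 + l2) - 2 * j - 1] w = 0) :
    ⁅tp 2 (l1 + l2 - j - 2) Yθ, ⁅tp 2 (l1 + l2 - j - 1) Yθ, w⁆⁆ = 0 := by
  have : IsAddTorsionFree V := .of_isTorsionFree ℂ V
  obtain ⟨n, hn⟩ : ∃ n, l1 + l2 - j = n + 2 := ⟨l1 + l2 - j - 2, by omega⟩
  have htrunc := h.rel.trunc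
  rw [hn] at htrunc
  rw [show 2 * (l1 + l2) - 2 * j - 1 = 2 * n + 3 by omega] at hnil
  rw [hn, Nat.add_sub_cancel, show n + 2 - 1 = n + 1 by omega]
  exact lie_y_lie_y_succ_eq_zero isCurrentSl2Triple_theta h.rel.weyl.lie_Hθ_succ
    (h.rel.weyl.lie_Xθ 1) htrunc hnil
end
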